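/- arXiv:1704.06938 — 10 statements merged into one kernel-verified Lean document; each statement's English description precedes it below -/
import Mathlib

section
/- Let f : ℝⁿ → ℝ be a lower semicontinuous convex function with S = {x : f(x) ≤ 0} nonempty and closed. Suppose there exist δ > 0, τ > 0, θ > 0 such that dist(x, S) ≤ τ(max(f(x),0) + max(f(x),0)^θ) for all x with f(x) ≤ δ. Then there exists τ' > 0 such that dist(x, S) ≤ τ'(max(f(x),0) + max(f(x),0)^θ) for all x ∈ ℝⁿ. -/
theorem stmt1 {n : ℕ} (f : EuclideanSpace ℝ (Fin n) → ℝ)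
    (hlsc : LowerSemicontinuous f) (hconv : ConvexOn ℝ Set.univ f)
    (hne : {x | f x ≤ 0}.Nonempty) (hcl : IsClosed {x | f x ≤ 0})
    (δ τ θ : ℝ) (hδ : 0 < δ) (hτ : 0 < τ) (hθ : 0 < θ)
    (hEB : ∀ x, f x ≤ δ →
      Metric.infDist x {y | f y ≤ 0} ≤ τ * (max (f x) 0 + max (f x) 0 ^ θ)) :
    ∃ τ' > (0:ℝ), ∀ x,
      Metric.infDist x {y | f y ≤ 0} ≤ τ' * (max (f x) 0 + max (f x) 0 ^ θ) := by
  set S := {x | f x ≤ 0} with hS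
  refine ⟨max τ (τ * (δ + δ ^ θ) / δ), lt_max_of_lt_left hτ, ?_⟩
  intro x
  rcases le_or_gt (f x) δ with hle | hgt
  · calc Metric.infDist x S ≤ τ * (max (f x) 0 + max (f x) 0 ^ θ) := hEB x hle
      _ ≤ max τ (τ * (δ + δ ^ θ) / δ) * (max (f x) 0 + max (f x) 0 ^ θ) := by
        apply mul_le_mul_of_nonneg_right (le_max_left _ _)
        have h1 : (0:ℝ) ≤ max (f x) 0 := le_max_right _ _
        have h2 : (0:ℝ) ≤ max (f x) 0 ^ θ := Real.rpow_nonneg h1 θ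
        linarith
  · have hfx : 0 < f x := hδ.trans hgt
    obtain ⟨xb, hxbS, hxbd⟩ := hcl.exists_infDist_eq_dist hne x
    set t : ℝ := δ / f x with ht
    have ht0 : 0 < t := div_pos hδ hfx
    have ht1 : t < 1 := (div_lt_one hfx).2 hgt
    set z := (1 - t) • xb + t • x with hz
    have hxb0 : f xb ≤ 0 := hxbS
    have hfz : f z ≤ δ := by
      have hcv := hconv.2 (Set.mem_univ xb) (Set.mem_univ x)
        (by linarith : (0:ℝ) ≤ 1 - t) ht0.le (by ring)
      have htf : t * f x = δ := by
        rw [ht]; field_simp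
      calc f z ≤ (1 - t) * f xb + t * f x := hcv
        _ ≤ t * f x := by nlinarith
        _ = δ := htf
    have hzmax : max (f z) 0 ≤ δ := max_le hfz hδ.le
    have hzS : Metric.infDist z S ≤ τ * (δ + δ ^ θ) := by
      calc Metric.infDist z S ≤ τ * (max (f z) 0 + max (f z) 0 ^ θ) := hEB z hfz
        _ ≤ τ * (δ + δ ^ θ) := by
          apply mul_le_mul_of_nonneg_left _ hτ.le
          have := Real.rpow_le_rpow (le_max_right (f z) 0) hzmax hθ.le
          linarith
    have hdxz : dist x z = (1 - t) * Metric.infDist x S := by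
      rw [hxbd, dist_eq_norm, dist_eq_norm]
      have hxz : x - z = (1 - t) • (x - xb) := by
        rw [hz]; module
      rw [hxz, norm_smul, Real.norm_eq_abs, abs_of_nonneg (by linarith : (0:ℝ) ≤ 1 - t)]
    have htri : Metric.infDist x S ≤ Metric.infDist z S + dist x z :=
      Metric.infDist_le_infDist_add_dist
    have key : t * Metric.infDist x S ≤ τ * (δ + δ ^ θ) := by nlinarith
    have hbound : Metric.infDist x S ≤ τ * (δ + δ ^ θ) / δ * f x := by
      rw [ht, div_mul_eq_mul_div, div_le_iff₀ hfx, mul_comm] at key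
      rw [div_mul_eq_mul_div, le_div_iff₀ hδ]
      linarith
    have hmax : max (f x) 0 = f x := max_eq_left hfx.le
    have hrpow : (0:ℝ) ≤ f x ^ θ := Real.rpow_nonneg hfx.le θ
    have hτ'pos : (0:ℝ) < τ * (δ + δ ^ θ) / δ := by
      have : (0:ℝ) < δ ^ θ := Real.rpow_pos_of_pos hδ θ
      positivity
    calc Metric.infDist x S ≤ τ * (δ + δ ^ θ) / δ * f x := hbound
      _ ≤ max τ (τ * (δ + δ ^ θ) / δ) * (f x + f x ^ θ) := by
        apply mul_le_mul (le_max_right _ _) (by linarith) hfx.le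
        positivity
      _ = max τ (τ * (δ + δ ^ θ) / δ) * (max (f x) 0 + max (f x) 0 ^ θ) := by
        rw [hmax]
end

section
/- For the quadratic function f(x) on ℝⁿ (any polynomial of degree at most 2), there exists τ > 0 such that dist(x, {f = 0}) ≤ τ(|f(x)| + |f(x)|^{1/2}) for all x ∈ ℝⁿ, provided {f = 0} is nonempty. -/
/-!
If `b` is not orthogonal to `ker A`, pick `w ∈ ker A` with `⟪b, w⟫ ≠ 0`: along the line `x + t • w`
the function `f` is affine in `t` with slope `⟪b, w⟫`, so some zero lies within `O(|f x|)` of `x`.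
Otherwise `b ∈ (ker A)ᗮ = range A`, say `b = A p`, and completing the square gives
`⟪A (x + p), x + p⟫ = 2 f x + γ`. In an orthonormal eigenbasis this is a diagonal form
`∑ μᵢ yᵢ²`, and a point below the level `γ` is moved onto it either along a coordinate with
`μᵢ > 0`, or, when all `μᵢ ≤ 0`, by shrinking the coordinates with `μᵢ ≠ 0` towards `0`; in both
cases the displacement is `O(√|f x|)`, since `√s - √g ≤ √(s - g)`.
-/

open scoped RealInnerProductSpace

theorem Real.sqrt_sub_sqrt_le_sqrt_sub {x y : ℝ} (hy : 0 ≤ y) (hyx : y ≤ x) :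
    √x - √y ≤ √(x - y) := by
  have h := Real.rpow_add_le_add_rpow (sub_nonneg.2 hyx) hy (p := 1 / 2) (by norm_num) (by norm_num)
  rw [sub_add_cancel, ← Real.sqrt_eq_rpow, ← Real.sqrt_eq_rpow, ← Real.sqrt_eq_rpow] at h
  linarith

section DiagonalForm

variable {ι : Type*} [Fintype ι]

noncomputable def diagQuad (μ : ι → ℝ) (w : EuclideanSpace ℝ ι) : ℝ :=
  ∑ i, μ i * w i ^ 2

theorem diagQuad_neg (μ : ι → ℝ) (w : EuclideanSpace ℝ ι) :
    diagQuad (-μ) w = -diagQuad μ w := by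
  simp [diagQuad, Finset.sum_neg_distrib, neg_mul]

theorem diagQuad_add_single [DecidableEq ι] (μ : ι → ℝ) (v : EuclideanSpace ℝ ι) (i : ι)
    (t : ℝ) :
    diagQuad μ (v + EuclideanSpace.single i t) =
      diagQuad μ v + μ i * ((v i + t) ^ 2 - v i ^ 2) := by
  rw [diagQuad, diagQuad, ← sub_eq_iff_eq_add', ← Finset.sum_sub_distrib,
    Finset.sum_eq_single i (fun j _ hj => by simp [hj])] <;> simp [mul_sub]

theorem exists_diagQuad_eq_add_of_pos {μ : ι → ℝ} {i : ι} (hi : 0 < μ i) {κ : ℝ} (hκ₀ : 0 ≤ κ)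
    (hκ : (μ i)⁻¹ ≤ κ ^ 2) (v : EuclideanSpace ℝ ι) {δ : ℝ} (hδ : 0 ≤ δ) :
    ∃ z, diagQuad μ z = diagQuad μ v + δ ∧ dist v z ≤ κ * √δ := by
  classical
  set a := v i
  set s := √(a ^ 2 + δ / μ i)
  have hs : s ^ 2 = a ^ 2 + δ / μ i := Real.sq_sqrt (by positivity)
  have has : |a| ≤ s := Real.abs_le_sqrt (le_add_of_nonneg_right (by positivity))
  -- move the `i`-th coordinate to `± s`, keeping its sign
  obtain ⟨t, hat, ht⟩ : ∃ t, (a + t) ^ 2 = s ^ 2 ∧ |t| = s - |a| := by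
    rcases le_or_gt 0 a with ha | ha
    · refine ⟨s - a, by ring, ?_⟩
      rw [abs_of_nonneg ha, abs_of_nonneg (sub_nonneg.2 ((le_abs_self a).trans has))]
    · refine ⟨-s - a, by ring, ?_⟩
      rw [abs_of_neg ha, abs_of_nonpos (by linarith [neg_le_abs a])]
      ring
  refine ⟨v + EuclideanSpace.single i t, ?_, ?_⟩
  · rw [diagQuad_add_single, hat, hs]
    field_simp
    ring
  calc dist v (v + EuclideanSpace.single i t) = s - √(a ^ 2) := by
        rw [dist_eq_norm, sub_add_cancel_left, norm_neg, PiLp.norm_single, Real.norm_eq_abs, ht,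
          Real.sqrt_sq_eq_abs]
    _ ≤ √(δ / μ i) := by
      simpa using
        Real.sqrt_sub_sqrt_le_sqrt_sub (sq_nonneg a) (le_add_of_nonneg_right (by positivity))
    _ = √(μ i)⁻¹ * √δ := by rw [div_eq_inv_mul, Real.sqrt_mul (inv_nonneg.2 hi.le)]
    _ ≤ κ * √δ := by gcongr; exact (Real.sqrt_le_left hκ₀).2 hκ

theorem exists_diagQuad_eq_of_nonpos {μ : ι → ℝ} (hμ : ∀ i, μ i ≤ 0) {κ : ℝ} (hκ₀ : 0 ≤ κ)
    (hκ : ∀ i, |μ i|⁻¹ ≤ κ ^ 2) {γ : ℝ} (hγ : γ ≤ 0) {v : EuclideanSpace ℝ ι}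
    (hv : diagQuad μ v < γ) :
    ∃ z, diagQuad μ z = γ ∧ dist v z ≤ κ * √(γ - diagQuad μ v) := by
  set q := diagQuad μ v
  have hq : q < 0 := hv.trans_le hγ
  set t := √(γ / q)
  have ht : t ^ 2 = γ / q := Real.sq_sqrt (div_nonneg_of_nonpos hγ hq.le)
  have ht₁ : t ≤ 1 := Real.sqrt_le_one.2 ((div_le_one_of_neg hq).2 hv.le)
  -- shrink the coordinates on which the form does not vanish
  let z : EuclideanSpace ℝ ι := WithLp.toLp 2 fun i => if μ i = 0 then v i else t * v i
  have hz : diagQuad μ z = t ^ 2 * q := by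
    simp only [diagQuad, q, Finset.mul_sum]
    refine Finset.sum_congr rfl fun i _ => ?_
    by_cases h : μ i = 0
    · simp [z, h]
    · simp only [z, h, if_false]
      ring
  refine ⟨z, by rw [hz, ht, div_mul_cancel₀ _ hq.ne], ?_⟩
  have hcoord : ∀ i, dist (v i) (z i) ^ 2 ≤ (κ * (1 - t)) ^ 2 * (-μ i * v i ^ 2) := by
    intro i
    by_cases h : μ i = 0
    · simp [z, h]
    · have hμi : 0 < -μ i := neg_pos.2 (lt_of_le_of_ne (hμ i) h)
      have : 1 ≤ κ ^ 2 * -μ i := by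
        have := hκ i
        rwa [abs_of_nonpos (hμ i), inv_le_iff_one_le_mul₀ hμi] at this
      simp only [z, h, if_false, Real.dist_eq, sq_abs]
      nlinarith [sq_nonneg ((1 - t) * v i)]
  calc dist v z = √(∑ i, dist (v i) (z i) ^ 2) := EuclideanSpace.dist_eq v z
    _ ≤ √((κ * (1 - t)) ^ 2 * -q) := by
      gcongr
      simpa only [q, diagQuad, ← Finset.sum_neg_distrib, Finset.mul_sum, neg_mul]
        using Finset.sum_le_sum fun i _ => hcoord i
    _ = κ * (√(-q) - t * √(-q)) := by
      rw [Real.sqrt_mul (sq_nonneg _), Real.sqrt_sq (by nlinarith)]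
      ring
    _ = κ * (√(-q) - √(-γ)) := by
      rw [← Real.sqrt_mul' _ (neg_nonneg.2 hq.le), mul_neg, div_mul_cancel₀ _ hq.ne]
    _ ≤ κ * √(γ - q) := by
      gcongr
      have h := Real.sqrt_sub_sqrt_le_sqrt_sub (neg_nonneg.2 hγ) (neg_le_neg hv.le)
      rwa [sub_neg_eq_add, neg_add_eq_sub] at h

theorem exists_diagQuad_eq_of_le {μ : ι → ℝ} {κ : ℝ} (hκ₀ : 0 ≤ κ) (hκ : ∀ i, |μ i|⁻¹ ≤ κ ^ 2)
    {γ : ℝ} (hγ : ∃ w, diagQuad μ w = γ) {v : EuclideanSpace ℝ ι} (hv : diagQuad μ v ≤ γ) :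
    ∃ z, diagQuad μ z = γ ∧ dist v z ≤ κ * √(γ - diagQuad μ v) := by
  rcases hv.eq_or_lt with hv | hv
  · exact ⟨v, hv, by rw [dist_self]; positivity⟩
  by_cases hpos : ∃ i, 0 < μ i
  · obtain ⟨i, hi⟩ := hpos
    obtain ⟨z, hz, hvz⟩ := exists_diagQuad_eq_add_of_pos hi hκ₀
      (by simpa [abs_of_pos hi] using hκ i) v (sub_nonneg.2 hv.le)
    exact ⟨z, by rw [hz, add_sub_cancel], hvz⟩
  · push Not at hpos
    obtain ⟨w, rfl⟩ := hγ
    exact exists_diagQuad_eq_of_nonpos hpos hκ₀ hκ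
      (Finset.sum_nonpos fun i _ => mul_nonpos_of_nonpos_of_nonneg (hpos i) (sq_nonneg _)) hv

theorem exists_diagQuad_eq {μ : ι → ℝ} {κ : ℝ} (hκ₀ : 0 ≤ κ) (hκ : ∀ i, |μ i|⁻¹ ≤ κ ^ 2)
    {γ : ℝ} (hγ : ∃ w, diagQuad μ w = γ) (v : EuclideanSpace ℝ ι) :
    ∃ z, diagQuad μ z = γ ∧ dist v z ≤ κ * √|diagQuad μ v - γ| := by
  rcases le_total (diagQuad μ v) γ with hv | hv
  · rw [abs_sub_comm, abs_of_nonneg (sub_nonneg.2 hv)]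
    exact exists_diagQuad_eq_of_le hκ₀ hκ hγ hv
  · obtain ⟨w, hw⟩ := hγ
    have h := exists_diagQuad_eq_of_le (μ := -μ) (γ := -γ) hκ₀ (by simpa using hκ)
      ⟨w, by rw [diagQuad_neg, hw]⟩ (v := v) (by rw [diagQuad_neg]; linarith)
    simp only [diagQuad_neg, neg_inj, sub_neg_eq_add, neg_add_eq_sub] at h
    rwa [abs_of_nonneg (sub_nonneg.2 hv)]

end DiagonalForm

section SymmetricOperator

variable {E : Type*} [NormedAddCommGroup E] [InnerProductSpace ℝ E] {T : E →ₗ[ℝ] E}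

theorem LinearMap.IsSymmetric.mem_range_or_exists_mem_ker_inner_ne_zero [FiniteDimensional ℝ E]
    (hT : T.IsSymmetric) (b : E) :
    b ∈ LinearMap.range T ∨ ∃ w ∈ LinearMap.ker T, ⟪b, w⟫ ≠ 0 := by
  by_cases h : b ∈ LinearMap.range T
  · exact Or.inl h
  · rw [← (LinearMap.range T).orthogonal_orthogonal, hT.orthogonal_range,
      Submodule.mem_orthogonal] at h
    push Not at h
    obtain ⟨w, hw, hwb⟩ := h
    exact Or.inr ⟨w, hw, by rwa [real_inner_comm]⟩

theorem LinearMap.IsSymmetric.inner_apply_self_eq_diagQuad [FiniteDimensional ℝ E] {n : ℕ}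
    (hT : T.IsSymmetric) (hn : Module.finrank ℝ E = n) (v : E) :
    ⟪T v, v⟫ = diagQuad (hT.eigenvalues hn) ((hT.eigenvectorBasis hn).repr v) := by
  rw [← (hT.eigenvectorBasis hn).repr.inner_map_map, PiLp.inner_apply, diagQuad]
  refine Finset.sum_congr rfl fun i _ => ?_
  rw [hT.eigenvectorBasis_apply_self_apply]
  simp only [Real.ringHom_apply, RCLike.inner_apply]
  ring

theorem LinearMap.IsSymmetric.exists_inner_apply_self_eq [FiniteDimensional ℝ E]
    (hT : T.IsSymmetric) :
    ∃ κ > 0, ∀ γ, (∃ w, ⟪T w, w⟫ = γ) →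
      ∀ v, ∃ z, ⟪T z, z⟫ = γ ∧ dist v z ≤ κ * √|⟪T v, v⟫ - γ| := by
  set e := hT.eigenvectorBasis rfl
  set μ := hT.eigenvalues rfl
  have hq := hT.inner_apply_self_eq_diagQuad rfl
  refine ⟨√(1 + ∑ i, |μ i|⁻¹), by positivity, fun γ ⟨w, hw⟩ v => ?_⟩
  have hκ : ∀ i, |μ i|⁻¹ ≤ √(1 + ∑ i, |μ i|⁻¹) ^ 2 := fun i => by
    rw [Real.sq_sqrt (by positivity)]
    exact (Finset.single_le_sum (fun j _ => inv_nonneg.2 (abs_nonneg (μ j)))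
      (Finset.mem_univ i)).trans (le_add_of_nonneg_left zero_le_one)
  obtain ⟨z, hz, hvz⟩ := exists_diagQuad_eq (Real.sqrt_nonneg _) hκ
    ⟨e.repr w, by rw [← hq, hw]⟩ (e.repr v)
  refine ⟨e.repr.symm z, by rw [hq, LinearIsometryEquiv.apply_symm_apply, hz], ?_⟩
  rwa [hq, ← e.repr.dist_map, LinearIsometryEquiv.apply_symm_apply]

variable {c : ℝ} {f : E → ℝ}

theorem exists_zero_dist_le_of_mem_ker (hT : T.IsSymmetric) {b : E}
    (hf : ∀ x, f x = ⟪T x, x⟫ / 2 + ⟪b, x⟫ + c) {w : E} (hw : T w = 0) (hwb : ⟪b, w⟫ ≠ 0)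
    (x : E) : ∃ z, f z = 0 ∧ dist x z ≤ ‖w‖ / |⟪b, w⟫| * |f x| := by
  have hline : ∀ t : ℝ, f (x + t • w) = f x + t * ⟪b, w⟫ := fun t => by
    have hxw : ⟪T x, w⟫ = 0 := by rw [hT, hw, inner_zero_right]
    simp only [hf, map_add, map_smul, hw, smul_zero, add_zero, inner_add_right,
      real_inner_smul_right, hxw]
    ring
  refine ⟨x + (-(f x / ⟪b, w⟫)) • w, ?_, ?_⟩
  · rw [hline, neg_mul, div_mul_cancel₀ _ hwb, add_neg_cancel]
  · rw [dist_eq_norm, sub_add_cancel_left, norm_neg, norm_smul, norm_neg, Real.norm_eq_abs,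
      abs_div]
    exact le_of_eq (by ring)

theorem exists_zero_dist_le_sqrt_of_mem_range [FiniteDimensional ℝ E] (hT : T.IsSymmetric)
    {p : E} (hf : ∀ x, f x = ⟪T x, x⟫ / 2 + ⟪T p, x⟫ + c) (hne : {x | f x = 0}.Nonempty) :
    ∃ κ > 0, ∀ x, ∃ z, f z = 0 ∧ dist x z ≤ κ * √|f x| := by
  obtain ⟨γ, hsq⟩ : ∃ γ, ∀ x, ⟪T (x + p), x + p⟫ = 2 * f x + γ := ⟨⟪T p, p⟫ - 2 * c, fun x => by
    have hpx : ⟪T x, p⟫ = ⟪T p, x⟫ := by rw [hT, real_inner_comm]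
    rw [hf, map_add, inner_add_left, inner_add_right, inner_add_right, hpx]
    ring⟩
  obtain ⟨κ, hκ, hnear⟩ := hT.exists_inner_apply_self_eq
  obtain ⟨x₀, hx₀⟩ := hne
  refine ⟨κ * √2, by positivity, fun x => ?_⟩
  obtain ⟨z, hz, hxz⟩ := hnear γ ⟨x₀ + p, by rw [hsq, hx₀, mul_zero, zero_add]⟩ (x + p)
  have hzp := hsq (z - p)
  rw [sub_add_cancel, hz] at hzp
  refine ⟨z - p, by linarith, ?_⟩
  calc dist x (z - p) = dist (x + p) z := by rw [dist_sub_eq_dist_add_right]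
    _ ≤ κ * √|⟪T (x + p), x + p⟫ - γ| := hxz
    _ = κ * √2 * √|f x| := by
      rw [hsq, add_sub_cancel_right, abs_mul, abs_two, Real.sqrt_mul zero_le_two, mul_assoc]

end SymmetricOperator

theorem stmt2 {n : ℕ} (A : EuclideanSpace ℝ (Fin n) →L[ℝ] EuclideanSpace ℝ (Fin n))
    (hA : ∀ x y, ⟪A x, y⟫ = ⟪x, A y⟫)
    (b : EuclideanSpace ℝ (Fin n)) (c : ℝ)
    (f : EuclideanSpace ℝ (Fin n) → ℝ)
    (hf : ∀ x, f x = ⟪A x, x⟫ / 2 + ⟪b, x⟫ + c)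
    (hne : {x | f x = 0}.Nonempty) :
    ∃ τ > (0:ℝ), ∀ x,
      Metric.infDist x {y | f y = 0} ≤ τ * (|f x| + |f x| ^ ((1:ℝ)/2)) := by
  have hT : (A : EuclideanSpace ℝ (Fin n) →ₗ[ℝ] EuclideanSpace ℝ (Fin n)).IsSymmetric := hA
  suffices ∃ τ > 0, ∀ x, ∃ z, f z = 0 ∧ dist x z ≤ τ * (|f x| + √|f x|) by
    obtain ⟨τ, hτ, hnear⟩ := this
    refine ⟨τ, hτ, fun x => ?_⟩
    obtain ⟨z, hz, hxz⟩ := hnear x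
    rw [← Real.sqrt_eq_rpow]
    exact (Metric.infDist_le_dist_of_mem (s := {y | f y = 0}) hz).trans hxz
  rcases hT.mem_range_or_exists_mem_ker_inner_ne_zero b with ⟨p, rfl⟩ | ⟨w, hw, hwb⟩
  · obtain ⟨κ, hκ, hnear⟩ := exists_zero_dist_le_sqrt_of_mem_range hT hf hne
    refine ⟨κ, hκ, fun x => (hnear x).imp fun z ⟨hz, hxz⟩ => ⟨hz, hxz.trans ?_⟩⟩
    gcongr
    exact le_add_of_nonneg_left (abs_nonneg _)
  · refine ⟨‖w‖ / |⟪b, w⟫|, ?_, fun x => (exists_zero_dist_le_of_mem_ker hT hf hw hwb x).imp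
      fun z ⟨hz, hxz⟩ => ⟨hz, hxz.trans ?_⟩⟩
    · have : w ≠ 0 := by rintro rfl; simp at hwb
      positivity
    · gcongr
      exact le_add_of_nonneg_right (Real.sqrt_nonneg _)
end

section
/- Let f(x,y) = x² + y⁴ on ℝ². Then {f ≤ 0} = {(0,0)}, and for all (x,y) one has dist((x,y), {(0,0)}) ≤ f(x,y)^{1/4} + f(x,y)^{1/2}. Moreover, there do not exist τ > 0 and a single exponent α ∈ ℝ with dist((x,y), {(0,0)}) ≤ τ f(x,y)^α for all (x,y) ∈ ℝ². -/
/-!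
Both inequalities for `f(x, y) = x² + y⁴` come from `|x| ≤ f^{1/2}`, `|y| ≤ f^{1/4}` and
`‖(x, y)‖ ≤ |x| + |y|`. A single exponent `α` is impossible because the two axes force opposite
bounds: along `(k, 0)` the distance is `k = (k²)^{1/2}`, which requires `α ≥ 1/2` as `k → ∞`,
while along `(0, 1/k)` it is `1/k = (k⁻⁴)^{1/4}`, which requires `α ≤ 1/4`.
The zero set is read off from the first inequality.
-/

open Filter

lemma EuclideanSpace.norm_le_abs_add_abs (p : EuclideanSpace ℝ (Fin 2)) :
    ‖p‖ ≤ |p 0| + |p 1| := by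
  rw [EuclideanSpace.norm_eq, Fin.sum_univ_two, Real.sqrt_le_left (by positivity)]
  simp only [Real.norm_eq_abs, sq_abs]
  nlinarith [abs_nonneg (p 0), abs_nonneg (p 1), sq_abs (p 0), sq_abs (p 1)]

lemma Real.abs_le_rpow_inv_of_pow_le {x a : ℝ} {n : ℕ} (hn : Even n) (hn₀ : n ≠ 0)
    (h : x ^ n ≤ a) : |x| ≤ a ^ (n⁻¹ : ℝ) := by
  calc |x| = (|x| ^ n) ^ (n⁻¹ : ℝ) := (Real.pow_rpow_inv_natCast (abs_nonneg x) hn₀).symm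
    _ ≤ a ^ (n⁻¹ : ℝ) := by
      rw [hn.pow_abs]
      exact Real.rpow_le_rpow (hn.pow_nonneg x) h (by positivity)

lemma Real.le_of_rpow_le_mul_rpow {a b τ : ℝ} (h : ∀ k : ℝ, 1 ≤ k → k ^ a ≤ τ * k ^ b) :
    a ≤ b := by
  by_contra! hba
  have hgrowth : Tendsto (fun k : ℝ => k ^ (a - b)) atTop atTop :=
    tendsto_rpow_atTop (sub_pos.mpr hba)
  obtain ⟨k, hkτ, hk⟩ :=
    ((hgrowth.eventually_gt_atTop τ).and (eventually_ge_atTop 1)).exists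
  have hk₀ : 0 < k := by linarith
  have hsplit : k ^ a = k ^ (a - b) * k ^ b := by
    rw [← Real.rpow_add hk₀, sub_add_cancel]
  have := h k hk
  rw [hsplit] at this
  nlinarith [Real.rpow_pos_of_pos hk₀ b]

section QuadQuartic

variable {f : EuclideanSpace ℝ (Fin 2) → ℝ} (hf : ∀ p, f p = (p 0) ^ 2 + (p 1) ^ 4)
include hf

lemma dist_zero_le_rpow_add_rpow (p : EuclideanSpace ℝ (Fin 2)) :
    dist p 0 ≤ f p ^ ((1:ℝ)/4) + f p ^ ((1:ℝ)/2) := by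
  have hx : |p 0| ≤ f p ^ ((1:ℝ)/2) := by
    simpa using Real.abs_le_rpow_inv_of_pow_le (x := p 0) even_two two_ne_zero
      (by rw [hf]; exact le_add_of_nonneg_right (by positivity))
  have hy : |p 1| ≤ f p ^ ((1:ℝ)/4) := by
    simpa using Real.abs_le_rpow_inv_of_pow_le (x := p 1) (by decide) four_ne_zero
      (by rw [hf]; exact le_add_of_nonneg_left (sq_nonneg _))
  rw [dist_zero_right]
  linarith [EuclideanSpace.norm_le_abs_add_abs p]

lemma one_le_two_mul_of_forall_dist_le {τ α : ℝ} (hbd : ∀ p, dist p 0 ≤ τ * f p ^ α) :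
    1 ≤ 2 * α :=
  Real.le_of_rpow_le_mul_rpow (τ := τ) fun k hk => by
    have hk₀ : 0 ≤ k := by linarith
    simpa [hf, EuclideanSpace.norm_eq, hk₀, ← Real.rpow_natCast_mul hk₀] using hbd !₂[k, 0]

lemma four_mul_le_one_of_forall_dist_le {τ α : ℝ} (hbd : ∀ p, dist p 0 ≤ τ * f p ^ α) :
    4 * α ≤ 1 := by
  have : -1 ≤ -(4 * α) := Real.le_of_rpow_le_mul_rpow (τ := τ) fun k hk => by
    have hk₀ : 0 ≤ k := by linarith
    simpa [hf, EuclideanSpace.norm_eq, hk₀, Real.rpow_neg hk₀, Real.inv_rpow,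
      ← Real.rpow_natCast_mul hk₀] using hbd !₂[0, k⁻¹]
  linarith

end QuadQuartic

theorem stmt4 (f : EuclideanSpace ℝ (Fin 2) → ℝ)
    (hf : ∀ p, f p = (p 0)^2 + (p 1)^4) :
    {p | f p ≤ 0} = {(0 : EuclideanSpace ℝ (Fin 2))} ∧
    (∀ p, dist p (0 : EuclideanSpace ℝ (Fin 2)) ≤ f p ^ ((1:ℝ)/4) + f p ^ ((1:ℝ)/2)) ∧
    ¬ ∃ τ > (0:ℝ), ∃ α : ℝ, ∀ p,
      dist p (0 : EuclideanSpace ℝ (Fin 2)) ≤ τ * f p ^ α := by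
  refine ⟨?_, dist_zero_le_rpow_add_rpow hf, ?_⟩
  · ext p
    simp only [Set.mem_ofPred_eq, Set.mem_singleton_iff]
    refine ⟨fun hp => ?_, fun hp => by simp [hp, hf]⟩
    have hf₀ : f p = 0 := le_antisymm hp (by rw [hf]; positivity)
    simpa [hf₀] using dist_zero_le_rpow_add_rpow hf p
  · rintro ⟨τ, -, α, hbd⟩
    linarith [one_le_two_mul_of_forall_dist_le hf hbd, four_mul_le_one_of_forall_dist_le hf hbd]
end

section
/- Let f(x,y) = x + √(x² + y²) on ℝ². Then f is convex and nonnegative, its zero set is {(x,0) : x ≤ 0}, and f does not admit a Lipschitz global error bound: there is no τ > 0 with dist((x,y), {f ≤ 0}) ≤ τ f(x,y) for all (x,y). -/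
open Real Metric Set

/-!
`f` is a linear functional plus the Euclidean norm, hence convex, and it is nonnegative because
`|x| ≤ ‖(x, y)‖`. So `{f ≤ 0}` is the zero set, the nonpositive `x`-axis, and every point of
height `1` lies at distance at least `1` from it. Yet `f (-τ, 1) = √(τ² + 1) - τ < 1 / τ`, so no
`τ` works as a Lipschitz error-bound constant.
-/

theorem add_sqrt_sq_add_sq_eq_zero_iff {x y : ℝ} : x + √(x ^ 2 + y ^ 2) = 0 ↔ x ≤ 0 ∧ y = 0 := by
  constructor
  · intro h
    have hx : x ≤ 0 := by linarith [sqrt_nonneg (x ^ 2 + y ^ 2)]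
    have hsq : x ^ 2 + y ^ 2 = x ^ 2 := by
      rw [← sq_sqrt (by positivity : 0 ≤ x ^ 2 + y ^ 2), show √(x ^ 2 + y ^ 2) = -x by linarith]
      ring
    exact ⟨hx, by nlinarith⟩
  · rintro ⟨hx, rfl⟩
    rw [zero_pow two_ne_zero, add_zero, sqrt_sq_eq_abs, abs_of_nonpos hx, add_neg_cancel]

theorem mul_sqrt_sq_add_one_sub_self_lt_one {k : ℝ} (hk : 0 < k) : k * (√(k ^ 2 + 1) - k) < 1 := by
  have hs : √(k ^ 2 + 1) ^ 2 = k ^ 2 + 1 := sq_sqrt (by positivity)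
  have hks : k < √(k ^ 2 + 1) := lt_sqrt_of_sq_lt (by linarith)
  nlinarith

theorem EuclideanSpace.norm_fin_two_eq_sqrt_sq_add_sq (p : EuclideanSpace ℝ (Fin 2)) :
    ‖p‖ = √(p 0 ^ 2 + p 1 ^ 2) := by
  simp [EuclideanSpace.norm_eq, Fin.sum_univ_two]

theorem convexOn_add_norm {E : Type*} [SeminormedAddCommGroup E] [NormedSpace ℝ E]
    (ℓ : E →ₗ[ℝ] ℝ) : ConvexOn ℝ univ fun p ↦ ℓ p + ‖p‖ :=
  (ℓ.convexOn convex_univ).add (convexOn_norm convex_univ)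

theorem EuclideanSpace.apply_add_norm_nonneg {ι : Type*} [Fintype ι] (p : EuclideanSpace ℝ ι)
    (i : ι) : 0 ≤ p i + ‖p‖ := by
  linarith [neg_abs_le (p i), PiLp.norm_apply_le p i, Real.norm_eq_abs (p i)]

theorem EuclideanSpace.abs_apply_le_infDist {ι : Type*} [Fintype ι]
    {s : Set (EuclideanSpace ℝ ι)} {i : ι} (hs : s.Nonempty) (h : ∀ q ∈ s, q i = 0)
    (p : EuclideanSpace ℝ ι) : |p i| ≤ infDist p s := by
  refine (le_infDist hs).2 fun q hq ↦ ?_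
  simpa [h q hq, Real.dist_eq] using PiLp.dist_apply_le p q i

theorem stmt5 (f : EuclideanSpace ℝ (Fin 2) → ℝ)
    (hf : ∀ p, f p = p 0 + Real.sqrt ((p 0)^2 + (p 1)^2)) :
    ConvexOn ℝ Set.univ f ∧ (∀ p, 0 ≤ f p) ∧
    {p | f p = 0} = {p : EuclideanSpace ℝ (Fin 2) | p 0 ≤ 0 ∧ p 1 = 0} ∧
    ¬ ∃ τ > (0:ℝ), ∀ p, Metric.infDist p {q | f q ≤ 0} ≤ τ * f p := by
  have hf_norm : f = fun p ↦ p 0 + ‖p‖ :=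
    funext fun p ↦ by rw [hf, EuclideanSpace.norm_fin_two_eq_sqrt_sq_add_sq]
  have hnonneg : ∀ p, 0 ≤ f p := hf_norm ▸ fun p ↦ EuclideanSpace.apply_add_norm_nonneg p 0
  have hzero : {p | f p = 0} = {p : EuclideanSpace ℝ (Fin 2) | p 0 ≤ 0 ∧ p 1 = 0} := by
    ext p
    simp only [mem_ofPred_eq, hf, add_sqrt_sq_add_sq_eq_zero_iff]
  have hconvex : ConvexOn ℝ univ f :=
    hf_norm ▸ convexOn_add_norm (EuclideanSpace.proj (0 : Fin 2) : _ →L[ℝ] ℝ).toLinearMap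
  refine ⟨hconvex, hnonneg, hzero, ?_⟩
  rintro ⟨τ, hτ, hbound⟩
  have hsublevel : {q | f q ≤ 0} = {q : EuclideanSpace ℝ (Fin 2) | q 0 ≤ 0 ∧ q 1 = 0} := by
    rw [← hzero]
    exact Set.ext fun q ↦ (hnonneg q).ge_iff_eq'
  let p : EuclideanSpace ℝ (Fin 2) := !₂[-τ, 1]
  have hdist : 1 ≤ infDist p {q | f q ≤ 0} := by
    rw [hsublevel]
    simpa [p] using
      EuclideanSpace.abs_apply_le_infDist (i := 1) ⟨0, by simp⟩ (fun q hq ↦ hq.2) p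
  have hvalue : f p = √(τ ^ 2 + 1) - τ := by
    simp only [p, hf, Matrix.cons_val_zero, Matrix.cons_val_one, Matrix.cons_val_fin_one,
      even_two, Even.neg_pow, one_pow]
    ring
  exact lt_irrefl (1 : ℝ) <| calc
    1 ≤ infDist p {q | f q ≤ 0} := hdist
    _ ≤ τ * f p := hbound p
    _ = τ * (√(τ ^ 2 + 1) - τ) := by rw [hvalue]
    _ < 1 := mul_sqrt_sq_add_one_sub_self_lt_one hτ
end

section
/- Let X be a normed space and f : X → ℝ ∪ {+∞} proper lower semicontinuous convex. For every x ∈ dom f that is not a global minimizer of f, the strong slope satisfies |∇f|(x) = sup { (f(x) − f(z)) / ‖x − z‖ : z with f(z) < f(x) }. -/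
open Topology Filter
open scoped ENNReal

-- The strong slope of an extended-real-valued function, with values in `ℝ≥0∞`:
-- `0` at local minimizers, otherwise `limsup_{y→x} (f(x) − f(y))₊ / ‖x − y‖`.
open Classical in
noncomputable def strongSlope {X : Type*} [NormedAddCommGroup X]
    (f : X → EReal) (x : X) : ℝ≥0∞ :=
  if IsLocalMin f x then 0
  else Filter.limsup (fun y => ENNReal.ofReal ((f x - f y).toReal / dist x y)) (𝓝[≠] x)

-- Convexity for extended-real-valued functions.
def ERealConvexOn {X : Type*} [NormedAddCommGroup X] [NormedSpace ℝ X]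
    (f : X → EReal) : Prop :=
  ∀ x y : X, ∀ a b : ℝ, 0 ≤ a → 0 ≤ b → a + b = 1 →
    f (a • x + b • y) ≤ (a : EReal) * f x + (b : EReal) * f y

theorem stmt6 {X : Type*} [NormedAddCommGroup X] [NormedSpace ℝ X]
    (f : X → EReal) (hlsc : LowerSemicontinuous f)
    (hproper : ∃ x, f x ≠ ⊤) (hbot : ∀ x, f x ≠ ⊥)
    (hconv : ERealConvexOn f)
    (x : X) (hdom : f x ≠ ⊤) (hmin : ∃ z, f z < f x) :
    strongSlope f x =
      ⨆ z ∈ {z | f z < f x}, ENNReal.ofReal ((f x - f z).toReal / dist x z) := by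
  obtain ⟨z0, hz00⟩ := hmin
  have hxbot := hbot x
  have hxlt : f x < ⊤ := hdom.lt_top
  set a := (f x).toReal with ha
  have hax : f x = (a : EReal) := (EReal.coe_toReal hdom hxbot).symm
  -- segment inequality from convexity
  have seg : ∀ z : X, f z < f x → ∀ t : ℝ, 0 < t → t < 1 →
      f (x + t • (z - x)) ≤ (((1 - t) * a + t * (f z).toReal : ℝ) : EReal) := by
    intro z hz t ht0 ht1
    have hzt : f z ≠ ⊤ := (hz.trans hxlt).ne
    have hbz : f z = ((f z).toReal : EReal) := (EReal.coe_toReal hzt (hbot z)).symm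
    have hmt : x + t • (z - x) = (1 - t) • x + t • z := by module
    have hcv := hconv x z (1 - t) t (by linarith) (le_of_lt ht0) (by ring)
    rw [hmt]
    calc f ((1-t) • x + t • z) ≤ ((1-t : ℝ) : EReal) * f x + (t : EReal) * f z := hcv
    _ = (((1-t)*a + t*(f z).toReal : ℝ) : EReal) := by
        rw [hax, hbz]; norm_cast
  -- tendsto of segment map
  have tendm : ∀ z : X, z ≠ x → Tendsto (fun t : ℝ => x + t • (z - x)) (𝓝[>] 0) (𝓝[≠] x) := by
    intro z hzx
    apply tendsto_nhdsWithin_of_tendsto_nhds_of_eventually_within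
    · have hc : Continuous fun t : ℝ => x + t • (z - x) :=
        continuous_const.add (continuous_id.smul continuous_const)
      have h0 := hc.tendsto 0
      simp only [zero_smul, add_zero] at h0
      exact h0.mono_left nhdsWithin_le_nhds
    · filter_upwards [self_mem_nhdsWithin] with t ht
      simp only [Set.mem_Ioi] at ht
      simp only [Set.mem_compl_iff, Set.mem_singleton_iff]
      intro h
      have h0 : t • (z - x) = 0 := by
        have := add_eq_left.mp h
        exact this
      rcases smul_eq_zero.mp h0 with h1 | h1
      · exact ht.ne' h1
      · exact hzx (by rwa [sub_eq_zero] at h1)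
  have hz0top : f z0 ≠ ⊤ := (hz00.trans hxlt).ne
  have hbz0 : f z0 = ((f z0).toReal : EReal) := (EReal.coe_toReal hz0top (hbot z0)).symm
  have hb0a : (f z0).toReal < a := by
    rw [hax, hbz0] at hz00; exact_mod_cast hz00
  have hz0x : z0 ≠ x := by
    intro h; rw [h] at hz00; exact lt_irrefl _ hz00
  -- x is not a local minimizer
  have hnotmin : ¬ IsLocalMin f x := by
    intro h
    have hev : ∀ᶠ y in 𝓝[≠] x, f x ≤ f y := h.filter_mono nhdsWithin_le_nhds
    have h1 := (tendm z0 hz0x).eventually hev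
    have hIoo : Set.Ioo (0:ℝ) 1 ∈ 𝓝[>] (0:ℝ) :=
      Ioo_mem_nhdsGT_of_mem (by constructor <;> norm_num)
    obtain ⟨t, hft, ht0, ht1⟩ := (h1.and (eventually_of_mem hIoo fun t ht => ht)).exists
    have hle := seg z0 hz00 t ht0 ht1
    have : f x < f x := by
      calc f x ≤ f (x + t • (z0 - x)) := hft
      _ ≤ (((1-t)*a + t*(f z0).toReal : ℝ) : EReal) := hle
      _ < (a : EReal) := by exact_mod_cast (by nlinarith : (1-t)*a + t*(f z0).toReal < a)
      _ = f x := hax.symm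
    exact lt_irrefl _ this
  rw [strongSlope, if_neg hnotmin]
  apply le_antisymm
  · refine Filter.limsup_le_of_le (by isBoundedDefault) ?_
    filter_upwards [self_mem_nhdsWithin] with y hy
    by_cases hfy : f y < f x
    · exact le_biSup (fun z => ENNReal.ofReal ((f x - f z).toReal / dist x z)) hfy
    · push_neg at hfy
      have h2 : (f x - f y).toReal ≤ 0 := by
        by_cases hyt : f y = ⊤
        · rw [hyt, hax]
          simp
        · have hy : f y = ((f y).toReal : EReal) := (EReal.coe_toReal hyt (hbot y)).symm
          have hay : a ≤ (f y).toReal := by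
            rw [hax, hy] at hfy; exact_mod_cast hfy
          rw [hax, hy, ← EReal.coe_sub, EReal.toReal_coe]
          linarith
      have h3 : (f x - f y).toReal / dist x y ≤ 0 :=
        div_nonpos_of_nonpos_of_nonneg h2 dist_nonneg
      simp [ENNReal.ofReal_eq_zero.mpr h3]
  · apply iSup₂_le
    intro z hz
    simp only [Set.mem_setOf_eq] at hz
    have hzt : f z ≠ ⊤ := (hz.trans hxlt).ne
    set b := (f z).toReal with hbdef
    have hbz : f z = (b : EReal) := (EReal.coe_toReal hzt (hbot z)).symm
    have hba : b < a := by rw [hax, hbz] at hz; exact_mod_cast hz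
    have hzx : z ≠ x := by intro h; rw [h] at hz; exact lt_irrefl _ hz
    have hd0 : 0 < dist x z := dist_pos.mpr (Ne.symm hzx)
    refine Filter.le_limsup_of_frequently_le ?_ (by isBoundedDefault)
    apply (tendm z hzx).frequently
    have hIoo : Set.Ioo (0:ℝ) 1 ∈ 𝓝[>] (0:ℝ) :=
      Ioo_mem_nhdsGT_of_mem (by constructor <;> norm_num)
    apply Filter.Eventually.frequently
    filter_upwards [hIoo] with t ht
    obtain ⟨ht0, ht1⟩ := ht
    have hseg := seg z hz t ht0 ht1
    have hmtop : f (x + t • (z - x)) ≠ ⊤ := by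
      intro h; rw [h] at hseg
      exact EReal.coe_ne_top _ (top_le_iff.mp hseg)
    set c := (f (x + t • (z - x))).toReal with hcdef
    have hmc : f (x + t • (z - x)) = (c : EReal) :=
      (EReal.coe_toReal hmtop (hbot _)).symm
    have hc : c ≤ (1-t)*a + t*b := by rw [hmc] at hseg; exact_mod_cast hseg
    have hdist : dist x (x + t • (z - x)) = t * dist x z := by
      rw [dist_eq_norm, dist_eq_norm]
      have : x - (x + t • (z - x)) = -(t • (z - x)) := by abel
      rw [this, norm_neg, norm_smul, Real.norm_eq_abs, abs_of_pos ht0, norm_sub_rev]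
    have hsub : f x - f z = ((a - b : ℝ) : EReal) := by rw [hax, hbz]; norm_cast
    have hsub2 : f x - f (x + t • (z - x)) = ((a - c : ℝ) : EReal) := by
      rw [hax, hmc]; norm_cast
    rw [hsub, hsub2, hdist, EReal.toReal_coe, EReal.toReal_coe]
    apply ENNReal.ofReal_le_ofReal
    rw [div_le_div_iff₀ hd0 (by positivity)]
    nlinarith
end

section
/- Let X be a Banach space, f : X → ℝ ∪ {+∞} lower semicontinuous, and −∞ < α < β ≤ +∞, τ > 0. If the strong slope satisfies |∇f|(x) ≥ 1/τ for all x with α < f(x) < β, then for every γ ∈ [α, β) and every x with γ < f(x) < β one has τ(f(x) − γ) ≥ dist(x, {f ≤ γ}). -/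
/-!
Put `h = (f - γ)₊ : X → ℝ≥0∞`; it is lower semicontinuous with zero set `{f ≤ γ}`.
For `0 < c < 1/τ`, Ekeland's variational principle gives `z` with `h z + c ‖x - z‖ ≤ h x`
that minimizes `h + c ‖z - ·‖`. Such a minimizer has `|∇f|(z) ≤ c < 1/τ`, while `f z ≤ f x < β`;
so `f z ≤ γ`, i.e. `h z = 0`, and `dist(x, {f ≤ γ}) ≤ ‖x - z‖ ≤ h x / c`. Now let `c ↑ 1/τ`.
-/

open Topology Filter
open scoped ENNReal NNReal

theorem EReal.continuous_sub_coe (γ : ℝ) : Continuous fun x : EReal => x - γ := by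
  refine continuous_iff_continuousAt.2 fun x => ?_
  have := EReal.continuousAt_add (p := (x, ((-γ : ℝ) : EReal)))
    (.inr (EReal.coe_ne_bot _)) (.inr (EReal.coe_ne_top _))
  simp only [sub_eq_add_neg, ← EReal.coe_neg]
  exact this.comp (f := fun y : EReal => (y, ((-γ : ℝ) : EReal))) (by fun_prop)

theorem EReal.toReal_sub_le_of_le_add {a b : EReal} {r : ℝ} (hr : 0 ≤ r) (h : a ≤ b + r) :
    (a - b).toReal ≤ r := by
  have hab : a - b ≤ r := EReal.sub_le_of_le_add' h
  generalize a - b = t at hab ⊢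
  induction t with
  | bot => simpa using hr
  | top => simp at hab
  | coe t => simpa using hab

theorem EReal.le_add_of_toENNReal_sub_le_add {a b : EReal} {γ r : ℝ} (hb : (γ : EReal) ≤ b)
    (hr : 0 ≤ r) (h : (a - γ).toENNReal ≤ (b - γ).toENNReal + ENNReal.ofReal r) :
    a ≤ b + r := by
  have h' : a - γ ≤ (b + r) - γ := calc
    a - γ ≤ ((a - γ).toENNReal : EReal) := by
      rw [EReal.coe_toENNReal_eq_max]; exact le_max_right _ _
    _ ≤ ((b - γ).toENNReal : EReal) + (ENNReal.ofReal r : EReal) := by exact_mod_cast h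
    _ = (b + r) - γ := by
      rw [EReal.coe_toENNReal (EReal.sub_nonneg (by simp) (by simp) |>.2 hb),
        EReal.coe_ennreal_ofReal, max_eq_left hr, sub_eq_add_neg, sub_eq_add_neg, add_right_comm]
  simpa only [EReal.sub_add_cancel] using add_le_add_left h' (γ : EReal)

theorem strongSlope_le_of_eventually_le_add {X : Type*} [NormedAddCommGroup X] {f : X → EReal}
    {z : X} {c : ℝ≥0} (h : ∀ᶠ y in 𝓝 z, f z ≤ f y + (c * dist z y : ℝ)) :
    strongSlope f z ≤ c := by
  rw [strongSlope]
  split_ifs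
  · exact zero_le
  refine limsup_le_of_le (by isBoundedDefault) ?_
  filter_upwards [nhdsWithin_le_nhds h, self_mem_nhdsWithin] with y hy hyz
  rw [← ENNReal.ofReal_coe_nnreal]
  refine ENNReal.ofReal_le_ofReal ((div_le_iff₀ (dist_pos.2 (Ne.symm hyz))).2 ?_)
  exact EReal.toReal_sub_le_of_le_add (by positivity) hy

theorem LowerSemicontinuous.toENNReal_sub_coe {X : Type*} [TopologicalSpace X] {f : X → EReal}
    (hf : LowerSemicontinuous f) (γ : ℝ) : LowerSemicontinuous fun y => (f y - γ).toENNReal :=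
  EReal.continuous_toENNReal.comp_lowerSemicontinuous
    ((EReal.continuous_sub_coe γ).comp_lowerSemicontinuous hf
      fun _ _ hab => EReal.sub_le_sub hab le_rfl)
    fun _ _ => EReal.toENNReal_le_toENNReal

theorem strongSlope_le_of_forall_toENNReal_sub_le_add {X : Type*} [NormedAddCommGroup X]
    {f : X → EReal} (hf : LowerSemicontinuous f) {γ : ℝ} {z : X} (hz : (γ : EReal) < f z)
    {c : ℝ≥0} (hmin : ∀ y, (f z - γ).toENNReal ≤ (f y - γ).toENNReal + c * edist z y) :
    strongSlope f z ≤ c := by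
  refine strongSlope_le_of_eventually_le_add ?_
  filter_upwards [hf z γ hz] with y hy
  refine EReal.le_add_of_toENNReal_sub_le_add hy.le (by positivity) ?_
  rw [ENNReal.ofReal_mul c.coe_nonneg, ENNReal.ofReal_coe_nnreal, ← edist_dist]
  exact hmin y

theorem ENNReal.exists_mem_forall_le_add {X : Type*} {s : Set X} (hs : s.Nonempty)
    (h : X → ℝ≥0∞) {ε : ℝ≥0∞} (hε : ε ≠ 0) : ∃ u ∈ s, ∀ y ∈ s, h u ≤ h y + ε := by
  by_cases hfin : ∃ y ∈ s, h y ≠ ⊤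
  · obtain ⟨y₀, hy₀, hy₀_ne⟩ := hfin
    have hlt : sInf (h '' s) < sInf (h '' s) + ε :=
      ENNReal.lt_add_right (ne_top_of_le_ne_top hy₀_ne (sInf_le (Set.mem_image_of_mem h hy₀))) hε
    obtain ⟨_, ⟨u, hu, rfl⟩, hu_lt⟩ := sInf_lt_iff.1 hlt
    refine ⟨u, hu, fun y hy => hu_lt.le.trans ?_⟩
    gcongr
    exact sInf_le (Set.mem_image_of_mem h hy)
  · simp only [not_exists, not_and, not_not] at hfin
    obtain ⟨u, hu⟩ := hs
    exact ⟨u, hu, fun y hy => by simp [hfin y hy]⟩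

namespace Ekeland

variable {X : Type*} [PseudoEMetricSpace X] {h : X → ℝ≥0∞} {c : ℝ≥0∞} {w u y : X}

/-- The points below `w` in the Brøndsted order `u ≼ w ↔ h u + c * edist w u ≤ h w`. -/
def lowerSet (h : X → ℝ≥0∞) (c : ℝ≥0∞) (w : X) : Set X := {u | h u + c * edist w u ≤ h w}

theorem mem_lowerSet_self (w : X) : w ∈ lowerSet h c w := by simp [lowerSet]

theorem le_of_mem_lowerSet (hu : u ∈ lowerSet h c w) : h u ≤ h w := le_self_add.trans hu

theorem lowerSet_subset (hu : u ∈ lowerSet h c w) : lowerSet h c u ⊆ lowerSet h c w := by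
  intro y hy
  calc h y + c * edist w y ≤ h y + c * edist u y + c * edist w u := by
        rw [add_assoc, ← mul_add, add_comm (edist u y)]
        gcongr
        exact edist_triangle _ _ _
    _ ≤ h w := (add_le_add_left hy _).trans hu

theorem isClosed_lowerSet (hh : LowerSemicontinuous h) (hc : c ≠ ⊤) (w : X) :
    IsClosed (lowerSet h c w) :=
  (hh.add ((ENNReal.continuous_const_mul hc).comp
    (continuous_const.edist continuous_id)).lowerSemicontinuous).isClosed_preimage (h w)

theorem mul_edist_le_of_forall_le_add {ε : ℝ≥0∞} (hw : h w ≠ ⊤)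
    (hmin : ∀ y ∈ lowerSet h c w, h w ≤ h y + ε) (hy : y ∈ lowerSet h c w) :
    c * edist w y ≤ ε :=
  ENNReal.le_of_add_le_add_left (ne_top_of_le_ne_top hw (le_of_mem_lowerSet hy))
    (hy.trans (hmin y hy))

/-- Ekeland's variational principle. -/
theorem exists_forall_le_add_mul_edist [CompleteSpace X] (hh : LowerSemicontinuous h)
    (hc₀ : c ≠ 0) (hc : c ≠ ⊤) {x : X} (hx : h x ≠ ⊤) :
    ∃ z, h z + c * edist x z ≤ h x ∧ ∀ y, h z ≤ h y + c * edist z y := by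
  choose F hF_mem hF_le using fun (n : ℕ) (w : X) =>
    ENNReal.exists_mem_forall_le_add ⟨w, mem_lowerSet_self (h := h) (c := c) w⟩ h
      (ENNReal.inv_ne_zero.2 (ENNReal.natCast_ne_top n))
  -- `u (n + 1)` is a `1/n`-almost minimizer of `h` on the lower set of `u n`.
  let u : ℕ → X := fun n => Nat.rec x F n
  have hu_anti : Antitone fun n => lowerSet h c (u n) :=
    antitone_nat_of_succ_le fun n => lowerSet_subset (hF_mem n (u n))
  have hu_mem {n m : ℕ} (hnm : n ≤ m) : u m ∈ lowerSet h c (u n) :=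
    hu_anti hnm (mem_lowerSet_self _)
  have hu_ne_top (n : ℕ) : h (u n) ≠ ⊤ :=
    ne_top_of_le_ne_top hx (le_of_mem_lowerSet (hu_mem n.zero_le))
  have hu_min (n : ℕ) :
      ∀ y ∈ lowerSet h c (u (n + 1)), h (u (n + 1)) ≤ h y + (n : ℝ≥0∞)⁻¹ :=
    fun y hy => hF_le n (u n) y (lowerSet_subset (hF_mem n (u n)) hy)
  have hu_small (n : ℕ) :
      ∀ y ∈ lowerSet h c (u (n + 1)), c * edist (u (n + 1)) y ≤ (n : ℝ≥0∞)⁻¹ :=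
    fun y => mul_edist_le_of_forall_le_add (hu_ne_top (n + 1)) (hu_min n)
  have hu_cauchy : CauchySeq u := by
    refine EMetric.cauchySeq_iff'.2 fun ε hε => ?_
    obtain ⟨n, hn⟩ := ENNReal.exists_inv_nat_lt (mul_ne_zero hc₀ hε.ne')
    refine ⟨n + 1, fun m hm => ?_⟩
    rw [edist_comm, ← ENNReal.mul_lt_mul_iff_right hc₀ hc]
    exact (hu_small n _ (hu_mem hm)).trans_lt hn
  obtain ⟨z, hz⟩ := cauchySeq_tendsto_of_complete hu_cauchy
  have hz_mem (n : ℕ) : z ∈ lowerSet h c (u n) :=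
    (isClosed_lowerSet hh hc _).mem_of_tendsto hz ((eventually_ge_atTop n).mono fun m => hu_mem)
  refine ⟨z, hz_mem 0, fun y => le_of_not_gt fun hy => ?_⟩
  have hy_mem (n : ℕ) : y ∈ lowerSet h c (u n) := lowerSet_subset (hz_mem n) hy.le
  have hzy : h z ≤ h y :=
    ge_of_tendsto' (by simpa using tendsto_const_nhds.add ENNReal.tendsto_inv_nat_nhds_zero)
      fun n => (le_of_mem_lowerSet (hz_mem (n + 1))).trans (hu_min n y (hy_mem (n + 1)))
  exact hy.not_ge (hzy.trans le_self_add)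

theorem infEDist_le_div_of_forall_exists_lt [CompleteSpace X] (hh : LowerSemicontinuous h)
    (hc : c ≠ 0) {x : X} (hx : h x ≠ ⊤)
    (hdescent : ∀ c' < c, ∀ z, 0 < h z → h z ≤ h x → ∃ y, h y + c' * edist z y < h z) :
    Metric.infEDist x {y | h y = 0} ≤ h x / c := by
  have hbound : ∀ c' ∈ Set.Ioo 0 c, Metric.infEDist x {y | h y = 0} ≤ h x / c' := by
    rintro c' ⟨hc'₀, hc'⟩
    obtain ⟨z, hzx, hz_min⟩ :=
      exists_forall_le_add_mul_edist hh hc'₀.ne' (ne_top_of_lt hc') hx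
    have hz : h z = 0 := by
      by_contra hz
      obtain ⟨y, hy⟩ := hdescent c' hc' z (pos_iff_ne_zero.2 hz) (le_self_add.trans hzx)
      exact (hz_min y).not_gt hy
    rw [hz, zero_add] at hzx
    calc Metric.infEDist x {y | h y = 0} ≤ edist x z := Metric.infEDist_le_edist_of_mem hz
      _ ≤ h x / c' := (ENNReal.le_div_iff_mul_le (.inl hc'₀.ne') (.inl (ne_top_of_lt hc'))).2
          (by rwa [mul_comm])
  have : (𝓝[<] c).NeBot := nhdsLT_neBot_of_exists_lt ⟨0, pos_iff_ne_zero.2 hc⟩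
  exact ge_of_tendsto
    (ENNReal.Tendsto.div tendsto_const_nhds (.inr hc) (tendsto_id.mono_left nhdsWithin_le_nhds)
      (.inr hx))
    (eventually_of_mem (Ioo_mem_nhdsLT (pos_iff_ne_zero.2 hc)) hbound)

end Ekeland

theorem stmt7_general {X : Type*} [NormedAddCommGroup X] [CompleteSpace X]
    (f : X → EReal) (hlsc : LowerSemicontinuous f)
    (α : ℝ) (β : EReal) (τ : ℝ) (hτ : 0 < τ)
    (hslope : ∀ x, (α : EReal) < f x → f x < β →
      ENNReal.ofReal (1 / τ) ≤ strongSlope f x) :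
    ∀ γ : ℝ, α ≤ γ → (γ : EReal) < β → ∀ x, (γ : EReal) < f x → f x < β →
      EMetric.infEdist x {y | f y ≤ (γ : EReal)} ≤
        ENNReal.ofReal (τ * ((f x).toReal - γ)) := by
  intro γ hαγ _ x hγx hxβ
  set h : X → ℝ≥0∞ := fun y => (f y - γ).toENNReal
  have hhx : h x = ENNReal.ofReal ((f x).toReal - γ) := by
    show (f x - γ).toENNReal = _
    lift f x to ℝ using ⟨hxβ.ne_top, ne_bot_of_gt hγx⟩ with t
    rfl
  have hzero : {y | f y ≤ (γ : EReal)} = {y | h y = 0} := by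
    ext y
    simp [h, EReal.toENNReal_eq_zero_iff, EReal.sub_nonpos]
  have hbound := Ekeland.infEDist_le_div_of_forall_exists_lt (h := h) (hlsc.toENNReal_sub_coe γ)
    (c := ENNReal.ofReal (1 / τ)) (by simpa using hτ) (hhx ▸ ENNReal.ofReal_ne_top) ?_
  · rw [hzero]
    refine hbound.trans_eq ?_
    rw [hhx, ← ENNReal.ofReal_div_of_pos (by positivity)]
    congr 1
    field_simp
  intro c' hc' z hz hzx
  lift c' to ℝ≥0 using ne_top_of_lt hc'
  by_contra! hz_min
  have hγz : (γ : EReal) < f z := by simpa [h, EReal.toENNReal_pos_iff, EReal.sub_pos] using hz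
  have hzβ : f z < β := by
    refine lt_of_le_of_lt ?_ hxβ
    simpa using EReal.le_add_of_toENNReal_sub_le_add (r := 0) hγx.le le_rfl (by simpa using hzx)
  have hslope_le : strongSlope f z ≤ c' :=
    strongSlope_le_of_forall_toENNReal_sub_le_add hlsc hγz hz_min
  exact ((hslope z ((EReal.coe_le_coe_iff.2 hαγ).trans_lt hγz) hzβ).trans hslope_le).not_gt hc'

theorem stmt7 {X : Type*} [NormedAddCommGroup X] [NormedSpace ℝ X] [CompleteSpace X]
    (f : X → EReal) (hlsc : LowerSemicontinuous f)
    (α : ℝ) (β : EReal) (hαβ : (α : EReal) < β) (τ : ℝ) (hτ : 0 < τ)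
    (hslope : ∀ x, (α : EReal) < f x → f x < β →
      ENNReal.ofReal (1 / τ) ≤ strongSlope f x) :
    ∀ γ : ℝ, α ≤ γ → (γ : EReal) < β → ∀ x, (γ : EReal) < f x → f x < β →
      EMetric.infEdist x {y | f y ≤ (γ : EReal)} ≤
        ENNReal.ofReal (τ * ((f x).toReal - γ)) :=
  stmt7_general f hlsc α β τ hτ hslope
end

section
/- Let X be a Banach space, f : X → ℝ ∪ {+∞} lower semicontinuous, −∞ < α < β ≤ +∞, and φ : [0, β−α) → [0,∞) continuous, φ(0)=0, C¹ with φ' > 0 on (0, β−α). If φ'(f(x) − α) · |∇f|(x) ≥ 1 for all x with α < f(x) < β, then φ(f(x) − α) ≥ dist(x, {f ≤ α}) for all x with α < f(x) < β. -/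
/-!
Suppose `φ (f x - α) < dist (x, [f ≤ α])` for some `x` with `α < f x < β`. Apply Ekeland's
variational principle to `g = φ (f - α)` (extended by `0` below `α`) at `x`, with a constant
`σ < 1` such that `g x < σ · dist (x, [f ≤ α])`. The resulting point `y` cannot lie in `[f ≤ α]`
(it is within `g x / σ` of `x`), nor in `[f ≥ β]` (`g y ≤ g x` and `φ` is increasing), and `g`
decreases at rate at most `σ` away from `y`. Since `φ` is differentiable at `f y - α` with
derivative `φ' (f y - α)`, `f` then has strong slope at most `σ / φ' (f y - α)` at `y`,
contradicting `φ' (f y - α) · |∇f| (y) ≥ 1`.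
-/

open Topology Filter Set
open scoped ENNReal NNReal

def zeroIco (b : EReal) : Set ℝ := {s | 0 ≤ s ∧ (s : EReal) < b}

lemma exists_eq_coe_add_of_lt_of_lt {α : ℝ} {β t : EReal} (hα : (α : EReal) < t) (hβ : t < β) :
    ∃ u : ℝ, 0 < u ∧ u ∈ zeroIco (β - α) ∧ t = ((α + u : ℝ) : EReal) := by
  lift t to ℝ using ⟨ne_top_of_lt hβ, ne_bot_of_gt hα⟩
  refine ⟨t - α, by simpa using hα, ⟨by simpa using hα.le, ?_⟩, by simp⟩
  rwa [EReal.lt_sub_iff_add_lt (.inl (EReal.coe_ne_bot α)) (.inl (EReal.coe_ne_top α)),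
    ← EReal.coe_add, sub_add_cancel]

lemma coe_add_lt_of_mem_zeroIco {α v : ℝ} {β : EReal} (hv : v ∈ zeroIco (β - α)) :
    ((α + v : ℝ) : EReal) < β := by
  have := hv.2
  rwa [EReal.lt_sub_iff_add_lt (.inl (EReal.coe_ne_bot α)) (.inl (EReal.coe_ne_top α)),
    ← EReal.coe_add, add_comm] at this

section DesingularizingFunction

variable {φ : ℝ → ℝ} {b : EReal}

lemma ordConnected_zeroIco (b : EReal) : (zeroIco b).OrdConnected :=
  ⟨fun _ hs _ ht _ hr => ⟨hs.1.trans hr.1, lt_of_le_of_lt (EReal.coe_le_coe_iff.2 hr.2) ht.2⟩⟩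

lemma strictMonoOn_zeroIco_of_hasDerivAt_pos {φ' : ℝ → ℝ} (hcont : ContinuousOn φ (zeroIco b))
    (hderiv : ∀ s : ℝ, 0 < s → (s : EReal) < b → HasDerivAt φ (φ' s) s ∧ 0 < φ' s) :
    StrictMonoOn φ (zeroIco b) := by
  refine strictMonoOn_of_deriv_pos (ordConnected_zeroIco b).convex hcont fun s hs => ?_
  have hs0 : s ∈ interior (Ici (0 : ℝ)) := interior_mono (fun _ h => h.1) hs
  rw [interior_Ici] at hs0
  have h := hderiv s hs0 (interior_subset hs).2
  rw [h.1.deriv]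
  exact h.2

lemma nonneg_of_strictMonoOn_zeroIco (hφ : StrictMonoOn φ (zeroIco b)) (hφ0 : φ 0 = 0) {s : ℝ}
    (hs : s ∈ zeroIco b) : 0 ≤ φ s := by
  have h0 : (0 : ℝ) ∈ zeroIco b := ⟨le_rfl, lt_of_le_of_lt (EReal.coe_le_coe_iff.2 hs.1) hs.2⟩
  exact hφ0 ▸ hφ.monotoneOn h0 hs hs.1

end DesingularizingFunction

lemma HasDerivAt.eventually_mul_sub_lt_sub {φ : ℝ → ℝ} {c c' v : ℝ} (h : HasDerivAt φ c v)
    (hc : c' < c) : ∀ᶠ w in 𝓝[<] v, c' * (v - w) < φ v - φ w := by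
  filter_upwards [nhdsWithin_mono v (fun w (hw : w < v) => hw.ne)
    ((hasDerivAt_iff_tendsto_slope.1 h).eventually (lt_mem_nhds hc)), self_mem_nhdsWithin]
    with w hslope (hw : w < v)
  rw [slope_def_field, lt_div_iff_of_neg (by linarith)] at hslope
  linarith

lemma ENNReal.exists_lt_one_lt_coe_mul {a b : ℝ≥0∞} (h : a < b) :
    ∃ σ : ℝ≥0, σ < 1 ∧ a < σ * b := by
  have htend : Tendsto (fun σ : ℝ≥0 => (σ : ℝ≥0∞) * b) (𝓝[<] 1) (𝓝 b) := by
    simpa using ENNReal.Tendsto.mul_const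
      ((ENNReal.continuous_coe.tendsto 1).mono_left nhdsWithin_le_nhds) (.inl one_ne_zero)
  have : (𝓝[<] (1 : ℝ≥0)).NeBot := nhdsLT_neBot_of_exists_lt ⟨0, one_pos⟩
  obtain ⟨σ, hσ, hσ1⟩ := ((htend.eventually (lt_mem_nhds h)).and self_mem_nhdsWithin).exists
  exact ⟨σ, hσ1, hσ⟩

lemma le_add_mul_dist_of_ofReal_le {Y : Type*} [PseudoMetricSpace Y] {a b : ℝ} {σ : ℝ≥0}
    {z y : Y} (hb : 0 ≤ b) (h : ENNReal.ofReal a ≤ ENNReal.ofReal b + σ * edist z y) :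
    a ≤ b + σ * dist z y := by
  rw [edist_dist, ← ENNReal.ofReal_coe_nnreal, ← ENNReal.ofReal_mul σ.coe_nonneg,
    ← ENNReal.ofReal_add hb (by positivity)] at h
  exact (ENNReal.ofReal_le_ofReal_iff (by positivity)).1 h

namespace Ekeland

variable {Y : Type*} [EMetricSpace Y] {g : Y → ℝ≥0∞} {σ : ℝ≥0}

def descentSet (g : Y → ℝ≥0∞) (σ : ℝ≥0) (w : Y) : Set Y :=
  {z | g z + σ * edist z w ≤ g w}

lemma mem_descentSet_self (w : Y) : w ∈ descentSet g σ w := by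
  simp [descentSet]

lemma le_of_mem_descentSet {z w : Y} (hz : z ∈ descentSet g σ w) : g z ≤ g w :=
  le_self_add.trans hz

lemma descentSet_subset {z w : Y} (hz : z ∈ descentSet g σ w) :
    descentSet g σ z ⊆ descentSet g σ w := fun u hu =>
  calc g u + σ * edist u w ≤ g u + σ * (edist u z + edist z w) := by
        gcongr; exact edist_triangle _ _ _
    _ = (g u + σ * edist u z) + σ * edist z w := by ring
    _ ≤ g z + σ * edist z w := by gcongr; exact hu
    _ ≤ g w := hz

lemma isClosed_descentSet (hg : LowerSemicontinuous g) (w : Y) :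
    IsClosed (descentSet g σ w) :=
  (hg.add ((ENNReal.continuous_const_mul ENNReal.coe_ne_top).comp
    (continuous_id.edist continuous_const)).lowerSemicontinuous).isClosed_preimage (g w)

lemma exists_mem_descentSet_le_add (w : Y) {ε : ℝ≥0∞} (hε : ε ≠ 0) :
    ∃ z ∈ descentSet g σ w, ∀ z' ∈ descentSet g σ w, g z ≤ g z' + ε := by
  by_cases htop : ⨅ z' ∈ descentSet g σ w, g z' = ⊤
  · refine ⟨w, mem_descentSet_self w, fun z' hz' => ?_⟩
    rw [iInf₂_eq_top] at htop
    simp [htop z' hz']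
  · have := ENNReal.lt_add_right htop hε
    simp only [iInf_lt_iff] at this
    obtain ⟨z, hz, hlt⟩ := this
    exact ⟨z, hz, fun z' hz' => hlt.le.trans (by gcongr; exact iInf₂_le z' hz')⟩

lemma edist_le_of_mem_descentSet {w z z' : Y} {δ : ℝ≥0∞} (hw : g w ≠ ⊤) (hσ : σ ≠ 0)
    (hz : z ∈ descentSet g σ w) (hmin : ∀ u ∈ descentSet g σ w, g z ≤ g u + σ * δ)
    (hz' : z' ∈ descentSet g σ z) : edist z' z ≤ δ := by
  have hfin : g z' ≠ ⊤ :=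
    ne_top_of_le_ne_top hw ((le_of_mem_descentSet hz').trans (le_of_mem_descentSet hz))
  have : g z' + σ * edist z' z ≤ g z' + σ * δ := hz'.trans (hmin z' (descentSet_subset hz hz'))
  exact (ENNReal.mul_le_mul_iff_right (by simpa using hσ) ENNReal.coe_ne_top).1
    (ENNReal.le_of_add_le_add_left hfin this)

end Ekeland

open Ekeland in
theorem LowerSemicontinuous.exists_ekeland {Y : Type*} [EMetricSpace Y] [CompleteSpace Y]
    {g : Y → ℝ≥0∞} (hg : LowerSemicontinuous g) {x₀ : Y} (hx₀ : g x₀ ≠ ⊤) {σ : ℝ≥0}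
    (hσ : σ ≠ 0) :
    ∃ y, g y + σ * edist y x₀ ≤ g x₀ ∧ ∀ z, g y ≤ g z + σ * edist z y := by
  choose step hstep hmin using fun (n : ℕ) (w : Y) =>
    exists_mem_descentSet_le_add (g := g) (σ := σ) w
      (ε := σ * (2 ^ n)⁻¹) (by simp [hσ])
  let t : ℕ → Y := fun n => Nat.rec x₀ step n
  have ht : ∀ n, t (n + 1) ∈ descentSet g σ (t n) := fun n => hstep n (t n)
  have hanti : Antitone fun n => descentSet g σ (t n) :=
    antitone_nat_of_succ_le fun n => descentSet_subset (ht n)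
  have hfin : ∀ n, g (t n) ≠ ⊤ := fun n => ne_top_of_le_ne_top hx₀
    (le_of_mem_descentSet (hanti (Nat.zero_le n) (mem_descentSet_self _)))
  -- `t (n + 1)` almost minimizes `g` on the descent set of `t n`, so the nested descent sets
  -- shrink to a single point, which is the Ekeland point.
  have hsmall : ∀ n, ∀ z ∈ descentSet g σ (t (n + 1)), edist z (t (n + 1)) ≤ (2 ^ n)⁻¹ :=
    fun n z hz => edist_le_of_mem_descentSet (hfin n) hσ (ht n) (hmin n (t n)) hz
  obtain ⟨y, hy⟩ := cauchySeq_tendsto_of_complete (u := fun n => t (n + 1))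
    (cauchySeq_of_edist_le_geometric_two 1 ENNReal.one_ne_top fun n => by
      rw [edist_comm, one_div]; exact hsmall n _ (ht (n + 1)))
  have hyt : ∀ n, y ∈ descentSet g σ (t n) := fun n =>
    (isClosed_descentSet hg _).mem_of_tendsto hy
      (eventually_atTop.2 ⟨n, fun k hk => hanti (show n ≤ k + 1 by omega) (mem_descentSet_self _)⟩)
  refine ⟨y, hyt 0, fun z => ?_⟩
  by_contra! hz
  have hzt : Tendsto (fun n => t (n + 1)) atTop (𝓝 z) := by
    refine tendsto_iff_edist_tendsto_0.2 (tendsto_of_tendsto_of_tendsto_of_le_of_le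
      (h := fun n : ℕ => ((2 : ℝ≥0∞) ^ n)⁻¹) tendsto_const_nhds ?_ (fun _ => zero_le) fun n => ?_)
    · simp [ENNReal.inv_pow]
    · rw [edist_comm]; exact hsmall n z (descentSet_subset (hyt (n + 1)) hz.le)
  obtain rfl := tendsto_nhds_unique hzt hy
  simp at hz

lemma strongSlope_le_ofReal {X : Type*} [NormedAddCommGroup X] {f : X → EReal} {y : X} {r : ℝ}
    (h : ∀ᶠ z in 𝓝 y, (f y - f z).toReal ≤ r * dist y z) :
    strongSlope f y ≤ ENNReal.ofReal r := by
  unfold strongSlope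
  split_ifs
  · exact zero_le
  · refine limsup_le_of_le (by isBoundedDefault) ?_
    filter_upwards [eventually_nhdsWithin_of_eventually_nhds h, self_mem_nhdsWithin]
      with z hz (hzy : z ≠ y)
    exact ENNReal.ofReal_le_ofReal ((div_le_iff₀ (dist_pos.2 hzy.symm)).2 hz)

section Desingularized

variable {X : Type*} {f : X → EReal} {α : ℝ} {β : EReal} {φ : ℝ → ℝ}

/-- `x ↦ φ (f x - α)`, written as a supremum over strict sublevel sets of `f` so that it is lower
semicontinuous whenever `f` is; it is `0` on `f ≤ α` and `φ (f x - α)` on `α < f < β`. -/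
noncomputable def desingularized (f : X → EReal) (α : ℝ) (β : EReal) (φ : ℝ → ℝ) (x : X) :
    ℝ≥0∞ :=
  ⨆ (s : ℝ) (_ : s ∈ zeroIco (β - α)) (_ : ((α + s : ℝ) : EReal) < f x), ENNReal.ofReal (φ s)

lemma ofReal_le_desingularized {s : ℝ} {x : X} (hs : s ∈ zeroIco (β - α))
    (hsx : ((α + s : ℝ) : EReal) < f x) : ENNReal.ofReal (φ s) ≤ desingularized f α β φ x :=
  le_iSup₂_of_le s hs (le_iSup_of_le hsx le_rfl)

lemma LowerSemicontinuous.desingularized [TopologicalSpace X] (hf : LowerSemicontinuous f) :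
    LowerSemicontinuous (desingularized f α β φ) := by
  intro x c hc
  simp only [_root_.desingularized, lt_iSup_iff] at hc
  obtain ⟨s, hs, hsx, hcs⟩ := hc
  exact (hf x _ hsx).mono fun z hz => hcs.trans_le (ofReal_le_desingularized hs hz)

lemma desingularized_eq (hmono : MonotoneOn φ (zeroIco (β - α)))
    (hcont : ContinuousOn φ (zeroIco (β - α))) {x : X} {u : ℝ} (hu0 : 0 < u)
    (hu : u ∈ zeroIco (β - α)) (hfx : f x = ((α + u : ℝ) : EReal)) :
    desingularized f α β φ x = ENNReal.ofReal (φ u) := by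
  refine le_antisymm (iSup₂_le fun s hs => iSup_le fun hsx => ?_) ?_
  · rw [hfx, EReal.coe_lt_coe_iff] at hsx
    exact ENNReal.ofReal_le_ofReal (hmono hs hu (by linarith))
  · have hIoo : Ioo 0 u ⊆ zeroIco (β - α) := fun s hs =>
      ⟨hs.1.le, lt_of_le_of_lt (EReal.coe_le_coe_iff.2 hs.2.le) hu.2⟩
    have htend : Tendsto (fun s => ENNReal.ofReal (φ s)) (𝓝[<] u) (𝓝 (ENNReal.ofReal (φ u))) :=
      ENNReal.tendsto_ofReal (nhdsWithin_Ioo_eq_nhdsLT hu0 ▸ ((hcont u hu).mono hIoo).tendsto)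
    refine le_of_tendsto htend ?_
    filter_upwards [Ioo_mem_nhdsLT hu0] with s hs
    refine ofReal_le_desingularized (hIoo hs) ?_
    rw [hfx, EReal.coe_lt_coe_iff]
    linarith [hs.2]

lemma lt_of_desingularized_le (hφ : StrictMonoOn φ (zeroIco (β - α))) (hφ0 : φ 0 = 0)
    {u : ℝ} (hu : u ∈ zeroIco (β - α)) {y : X}
    (h : desingularized f α β φ y ≤ ENNReal.ofReal (φ u)) : f y < β := by
  by_contra! hβ
  obtain ⟨s, hus, hsβ⟩ := EReal.lt_iff_exists_real_btwn.1 hu.2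
  have hs : s ∈ zeroIco (β - α) := ⟨hu.1.trans (EReal.coe_lt_coe_iff.1 hus).le, hsβ⟩
  have hφus : φ u < φ s := hφ hu hs (EReal.coe_lt_coe_iff.1 hus)
  have := (ofReal_le_desingularized hs ((coe_add_lt_of_mem_zeroIco hs).trans_le hβ)).trans h
  exact this.not_gt ((ENNReal.ofReal_lt_ofReal_iff
    ((nonneg_of_strictMonoOn_zeroIco hφ hφ0 hu).trans_lt hφus)).2 hφus)

lemma eventually_toReal_sub_le_mul_dist [PseudoMetricSpace X] (hf : LowerSemicontinuous f)
    (hφ : StrictMonoOn φ (zeroIco (β - α))) (hφ0 : φ 0 = 0)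
    (hcont : ContinuousOn φ (zeroIco (β - α))) {y : X} {v c c' : ℝ} (hv0 : 0 < v)
    (hv : v ∈ zeroIco (β - α)) (hfy : f y = ((α + v : ℝ) : EReal)) (hder : HasDerivAt φ c v)
    (hc' : c' < c) (hc'0 : 0 < c') {σ : ℝ≥0}
    (hy : ∀ z, desingularized f α β φ y ≤ desingularized f α β φ z + σ * edist z y) :
    ∀ᶠ z in 𝓝 y, (f y - f z).toReal ≤ σ / c' * dist y z := by
  obtain ⟨a, hav, ha⟩ := mem_nhdsLT_iff_exists_Ioo_subset.1 (hder.eventually_mul_sub_lt_sub hc')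
  -- By lower semicontinuity, near `y` the value `f z` is either `≥ f y` or in the range
  -- `(α + a, f y)` where `φ` drops at rate at least `c'`.
  have hlsc : ∀ᶠ z in 𝓝 y, ((α + max a 0 : ℝ) : EReal) < f z :=
    hf y _ (show _ < f y by rw [hfy, EReal.coe_lt_coe_iff]; linarith [max_lt hav hv0])
  filter_upwards [hlsc] with z hz
  rcases le_or_gt (f y) (f z) with hyz | hzy
  · exact (EReal.toReal_nonpos (EReal.sub_nonpos.2 hyz)).trans (by positivity)
  have hzα : (α : EReal) < f z :=
    lt_of_le_of_lt (EReal.coe_le_coe_iff.2 (by linarith [le_max_right a 0])) hz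
  obtain ⟨w, hw0, hw, hfz⟩ :=
    exists_eq_coe_add_of_lt_of_lt hzα (hzy.trans (hfy ▸ coe_add_lt_of_mem_zeroIco hv))
  rw [hfz, EReal.coe_lt_coe_iff] at hz
  rw [hfy, hfz, EReal.coe_lt_coe_iff] at hzy
  have hdrop : c' * (v - w) < φ v - φ w := ha ⟨by linarith [le_max_left a 0], by linarith⟩
  have hek : φ v ≤ φ w + σ * dist z y := by
    refine le_add_mul_dist_of_ofReal_le (nonneg_of_strictMonoOn_zeroIco hφ hφ0 hw) ?_
    simpa only [desingularized_eq hφ.monotoneOn hcont hv0 hv hfy,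
      desingularized_eq hφ.monotoneOn hcont hw0 hw hfz] using hy z
  rw [hfy, hfz, ← EReal.coe_sub, EReal.toReal_coe, dist_comm, div_mul_eq_mul_div,
    le_div_iff₀ hc'0]
  linarith

end Desingularized

theorem stmt8_general {X : Type*} [NormedAddCommGroup X] [CompleteSpace X]
    (f : X → EReal) (hlsc : LowerSemicontinuous f)
    (α : ℝ) (β : EReal)
    (φ φ' : ℝ → ℝ) (hφ0 : φ 0 = 0)
    (hφcont : ContinuousOn φ {s : ℝ | 0 ≤ s ∧ (s : EReal) < β - (α : EReal)})
    (hφderiv : ∀ s : ℝ, 0 < s → (s : EReal) < β - (α : EReal) →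
      HasDerivAt φ (φ' s) s ∧ 0 < φ' s)
    (hKL : ∀ x, (α : EReal) < f x → f x < β →
      1 ≤ ENNReal.ofReal (φ' ((f x).toReal - α)) * strongSlope f x) :
    ∀ x, (α : EReal) < f x → f x < β →
      EMetric.infEdist x {y | f y ≤ (α : EReal)} ≤
        ENNReal.ofReal (φ ((f x).toReal - α)) := by
  intro x hxα hxβ
  have hφ : StrictMonoOn φ (zeroIco (β - α)) :=
    strictMonoOn_zeroIco_of_hasDerivAt_pos hφcont hφderiv
  obtain ⟨u, hu0, hu, hfx⟩ := exists_eq_coe_add_of_lt_of_lt hxα hxβ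
  have hgx := desingularized_eq hφ.monotoneOn hφcont hu0 hu hfx
  rw [hfx, EReal.toReal_coe, add_sub_cancel_left, ← hgx]
  by_contra! hdist
  obtain ⟨σ, hσ1, hσ⟩ := ENNReal.exists_lt_one_lt_coe_mul hdist
  obtain ⟨y, hyx, hy⟩ := hlsc.desingularized.exists_ekeland (hgx ▸ ENNReal.ofReal_ne_top)
    (σ := σ) (by rintro rfl; simp at hσ)
  have hyα : (α : EReal) < f y := by
    by_contra! hyS
    have : (σ : ℝ≥0∞) * Metric.infEDist x {y | f y ≤ α} ≤ σ * edist y x := by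
      gcongr; rw [edist_comm]; exact Metric.infEDist_le_edist_of_mem hyS
    exact (hσ.trans_le this).not_ge (le_add_self.trans hyx)
  have hyβ : f y < β := lt_of_desingularized_le hφ hφ0 hu (hgx ▸ le_self_add.trans hyx)
  obtain ⟨v, hv0, hv, hfy⟩ := exists_eq_coe_add_of_lt_of_lt hyα hyβ
  obtain ⟨hder, hc⟩ := hφderiv v hv0 hv.2
  obtain ⟨c', hσc', hc'⟩ := exists_between (mul_lt_of_lt_one_left hc (show (σ : ℝ) < 1 from hσ1))
  have hc'0 : 0 < c' := (by positivity : 0 ≤ (σ : ℝ) * φ' v).trans_lt hσc'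
  have hslope := strongSlope_le_ofReal
    (eventually_toReal_sub_le_mul_dist hlsc hφ hφ0 hφcont hv0 hv hfy hder hc' hc'0 hy)
  have hKLy := hKL y hyα hyβ
  rw [hfy, EReal.toReal_coe, add_sub_cancel_left] at hKLy
  refine hKLy.not_gt (lt_of_le_of_lt
    (by gcongr : _ ≤ ENNReal.ofReal (φ' v) * ENNReal.ofReal (σ / c')) ?_)
  rw [← ENNReal.ofReal_mul hc.le, ENNReal.ofReal_lt_one, mul_div_assoc', div_lt_one hc'0]
  linarith

theorem stmt8 {X : Type*} [NormedAddCommGroup X] [NormedSpace ℝ X] [CompleteSpace X]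
    (f : X → EReal) (hlsc : LowerSemicontinuous f)
    (α : ℝ) (β : EReal) (hαβ : (α : EReal) < β)
    (φ φ' : ℝ → ℝ) (hφ0 : φ 0 = 0)
    (hφcont : ContinuousOn φ {s : ℝ | 0 ≤ s ∧ (s : EReal) < β - (α : EReal)})
    (hφderiv : ∀ s : ℝ, 0 < s → (s : EReal) < β - (α : EReal) →
      HasDerivAt φ (φ' s) s ∧ 0 < φ' s)
    (hKL : ∀ x, (α : EReal) < f x → f x < β →
      1 ≤ ENNReal.ofReal (φ' ((f x).toReal - α)) * strongSlope f x) :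
    ∀ x, (α : EReal) < f x → f x < β →
      EMetric.infEdist x {y | f y ≤ (α : EReal)} ≤
        ENNReal.ofReal (φ ((f x).toReal - α)) :=
  stmt8_general f hlsc α β φ φ' hφ0 hφcont hφderiv hKL
end

section
/- Let f : ℝⁿ → ℝ ∪ {+∞} be proper lower semicontinuous and convex, with −∞ < α < β ≤ +∞. Suppose φ : [0, β−α) → [0,∞) is increasing, φ(0)=0, continuously differentiable on (0,β−α), and φ(f(x) − α) ≥ dist(x, {f ≤ α}) for all x with α < f(x) < β. If ∫₀^{β−α} φ(s)/s ds < +∞, then setting ψ(s) = ∫₀^s φ(t)/t dt, one has ψ'(f(x) − α) · dist(0, ∂f(x)) ≥ 1 for all x with α < f(x) < β. -/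
/-! If `u` is a subgradient of `f` at `x`, then every point `y` of the sublevel set `{f ≤ α}`
satisfies `f x - α ≤ ⟪u, x - y⟫ ≤ ‖u‖ dist(x, y)`, so `f x - α ≤ ‖u‖ dist(x, {f ≤ α})`.
The error bound `dist(x, {f ≤ α}) ≤ φ(f x - α)` then gives `‖u‖ ≥ (f x - α) / φ(f x - α)`,
and `(f x - α) / φ(f x - α)` is exactly `1 / ψ'(f x - α)` by the fundamental theorem of calculus. -/

open Topology Filter MeasureTheory
open scoped ENNReal RealInnerProductSpace

theorem hasDerivAt_integral_Ioc {E : Type*} [NormedAddCommGroup E] [NormedSpace ℝ E]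
    [CompleteSpace E] {g : ℝ → E} {a r : ℝ} (har : a < r)
    (hint : IntervalIntegrable g volume a r) (hmeas : StronglyMeasurableAtFilter g (𝓝 r))
    (hcont : ContinuousAt g r) :
    HasDerivAt (fun s => ∫ t in Set.Ioc a s, g t) (g r) r := by
  have hIoc : (fun s => ∫ t in Set.Ioc a s, g t) =ᶠ[𝓝 r] fun s => ∫ t in a..s, g t := by
    filter_upwards [Ioi_mem_nhds har] with s hs
    rw [intervalIntegral.integral_of_le hs.le]
  exact (intervalIntegral.integral_hasDerivAt_right hint hmeas hcont).congr_of_eventuallyEq hIoc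

theorem one_le_ofReal_div_mul_iInf_nnnorm {E : Type*} [SeminormedAddGroup E] {s : Set E}
    {a b : ℝ} (ha : 0 < a) (hb : 0 < b) (h : ∀ u ∈ s, b ≤ ‖u‖ * a) :
    1 ≤ ENNReal.ofReal (a / b) * ⨅ u ∈ s, (‖u‖₊ : ℝ≥0∞) := by
  rw [← ENNReal.inv_le_iff_le_mul (fun _ => (ENNReal.ofReal_pos.mpr (div_pos ha hb)).ne')
    (absurd · ENNReal.ofReal_ne_top), ← ENNReal.ofReal_inv_of_pos (div_pos ha hb), inv_div]
  refine le_iInf₂ fun u hu => ?_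
  rw [← ENNReal.ofReal_coe_nnreal, coe_nnnorm, ENNReal.ofReal_le_ofReal_iff (norm_nonneg u),
    div_le_iff₀ ha]
  exact h u hu

section Subdifferential

variable {E : Type*} [NormedAddCommGroup E] [InnerProductSpace ℝ E]

def ERealSubdifferential (f : E → EReal) (x : E) : Set E :=
  {u | ∀ y, f x + ((⟪u, y - x⟫ : ℝ) : EReal) ≤ f y}

variable {f : E → EReal} {x u : E} {F α : ℝ}

theorem sub_le_norm_mul_dist_of_mem_subdifferential (hu : u ∈ ERealSubdifferential f x)
    (hx : f x = F) {y : E} (hy : f y ≤ α) : F - α ≤ ‖u‖ * dist x y := by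
  have hFα : F + ⟪u, y - x⟫ ≤ α := by
    have := (hu y).trans hy
    rwa [hx, ← EReal.coe_add, EReal.coe_le_coe_iff] at this
  calc F - α ≤ ⟪u, x - y⟫ := by rw [← neg_sub y x, inner_neg_right]; linarith
    _ ≤ ‖u‖ * ‖x - y‖ := real_inner_le_norm u (x - y)
    _ = ‖u‖ * dist x y := by rw [dist_eq_norm]

theorem sub_le_norm_mul_of_infEDist_le (hu : u ∈ ERealSubdifferential f x) (hx : f x = F)
    {d : ℝ} (hd : 0 ≤ d) (hEB : Metric.infEDist x {y | f y ≤ α} ≤ ENNReal.ofReal d) :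
    F - α ≤ ‖u‖ * d := by
  set S := {y | f y ≤ (α : EReal)}
  have hS : S.Nonempty := Set.nonempty_iff_ne_empty.mpr fun hempty =>
    ENNReal.ofReal_ne_top (top_le_iff.mp (Metric.infEDist_eq_top_iff.mpr hempty ▸ hEB))
  have hdist : Metric.infDist x S ≤ d := by
    rw [Metric.infDist, ← ENNReal.toReal_ofReal hd]
    exact ENNReal.toReal_mono ENNReal.ofReal_ne_top hEB
  rcases eq_or_ne u 0 with rfl | hu0
  · obtain ⟨y, hy⟩ := hS
    simpa using sub_le_norm_mul_dist_of_mem_subdifferential hu hx hy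
  have hnorm : 0 < ‖u‖ := norm_pos_iff.mpr hu0
  have : (F - α) / ‖u‖ ≤ Metric.infDist x S := by
    rw [Metric.le_infDist hS]
    intro y hy
    rw [div_le_iff₀' hnorm]
    exact sub_le_norm_mul_dist_of_mem_subdifferential hu hx hy
  rw [← div_le_iff₀' hnorm]
  exact this.trans hdist

end Subdifferential

theorem stmt9_general {n : ℕ} (f : EuclideanSpace ℝ (Fin n) → EReal)
    (hbot : ∀ x, f x ≠ ⊥)
    (α : ℝ) (β : EReal)
    (φ : ℝ → ℝ) (hφ0 : φ 0 = 0)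
    (hφmono : StrictMonoOn φ {s : ℝ | 0 ≤ s ∧ (s : EReal) < β - (α : EReal)})
    (hφC1 : ContDiffOn ℝ 1 φ {s : ℝ | 0 < s ∧ (s : EReal) < β - (α : EReal)})
    (hEB : ∀ x, (α : EReal) < f x → f x < β →
      EMetric.infEdist x {y | f y ≤ (α : EReal)} ≤
        ENNReal.ofReal (φ ((f x).toReal - α)))
    (hint : MeasureTheory.IntegrableOn (fun t => φ t / t)
      {t : ℝ | 0 < t ∧ (t : EReal) < β - (α : EReal)}) :
    ∀ x, (α : EReal) < f x → f x < β →
      1 ≤ ENNReal.ofReal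
            (deriv (fun s => ∫ t in Set.Ioc (0:ℝ) s, φ t / t) ((f x).toReal - α)) *
          ⨅ u ∈ {u : EuclideanSpace ℝ (Fin n) |
              ∀ y, f x + ((⟪u, y - x⟫ : ℝ) : EReal) ≤ f y}, (‖u‖₊ : ℝ≥0∞) := by
  intro x hαx hxβ
  set F := (f x).toReal
  have hx : f x = F := (EReal.coe_toReal hxβ.ne_top (hbot x)).symm
  set r := F - α
  set D := {t : ℝ | 0 < t ∧ (t : EReal) < β - (α : EReal)}
  have hr : 0 < r := sub_pos.mpr (by rw [hx] at hαx; exact_mod_cast hαx)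
  have hrD : r ∈ D := ⟨hr, by
    rw [EReal.coe_sub, ← hx]
    exact EReal.sub_lt_sub_of_lt_of_le hxβ le_rfl (by simp) (by simp)⟩
  have hD : D ∈ 𝓝 r :=
    (isOpen_Ioi.inter (isOpen_Iio.preimage continuous_coe_real_ereal)).mem_nhds hrD
  have hφr : 0 < φ r := hφ0 ▸ hφmono ⟨le_rfl, (EReal.coe_lt_coe_iff.mpr hr).trans hrD.2⟩
    ⟨hr.le, hrD.2⟩ hr
  have hderiv : deriv (fun s => ∫ t in Set.Ioc 0 s, φ t / t) r = φ r / r :=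
    (hasDerivAt_integral_Ioc hr
      ((intervalIntegrable_iff_integrableOn_Ioc_of_le hr.le).mpr <| hint.mono_set
        fun t ht => ⟨ht.1, (EReal.coe_le_coe_iff.mpr ht.2).trans_lt hrD.2⟩)
      ⟨D, hD, hint.aestronglyMeasurable⟩
      ((hφC1.continuousOn.div continuousOn_id fun t ht => ht.1.ne').continuousAt hD)).deriv
  rw [hderiv]
  exact one_le_ofReal_div_mul_iInf_nnnorm hφr hr fun u hu =>
    sub_le_norm_mul_of_infEDist_le hu hx hφr.le (hEB x hαx hxβ)

theorem stmt9 {n : ℕ} (f : EuclideanSpace ℝ (Fin n) → EReal)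
    (hlsc : LowerSemicontinuous f) (hconv : ERealConvexOn f)
    (hproper : ∃ x, f x ≠ ⊤) (hbot : ∀ x, f x ≠ ⊥)
    (α : ℝ) (β : EReal) (hαβ : (α : EReal) < β)
    (φ : ℝ → ℝ) (hφ0 : φ 0 = 0)
    (hφmono : StrictMonoOn φ {s : ℝ | 0 ≤ s ∧ (s : EReal) < β - (α : EReal)})
    (hφC1 : ContDiffOn ℝ 1 φ {s : ℝ | 0 < s ∧ (s : EReal) < β - (α : EReal)})
    (hEB : ∀ x, (α : EReal) < f x → f x < β →
      EMetric.infEdist x {y | f y ≤ (α : EReal)} ≤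
        ENNReal.ofReal (φ ((f x).toReal - α)))
    (hint : MeasureTheory.IntegrableOn (fun t => φ t / t)
      {t : ℝ | 0 < t ∧ (t : EReal) < β - (α : EReal)}) :
    ∀ x, (α : EReal) < f x → f x < β →
      1 ≤ ENNReal.ofReal
            (deriv (fun s => ∫ t in Set.Ioc (0:ℝ) s, φ t / t) ((f x).toReal - α)) *
          ⨅ u ∈ {u : EuclideanSpace ℝ (Fin n) |
              ∀ y, f x + ((⟪u, y - x⟫ : ℝ) : EReal) ≤ f y}, (‖u‖₊ : ℝ≥0∞) :=
  stmt9_general f hbot α β φ hφ0 hφmono hφC1 hEB hint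
end

section
/- Let f : X → ℝ ∪ {+∞} be proper lower semicontinuous convex on a Banach space X, with {f ≤ 0} nonempty, and suppose there exist δ > 0 and Δ > 0 such that {f ≤ −δ} is nonempty and dist(x, {f ≤ −δ}) ≤ Δ for all x with f(x) ≤ 0. Then dist(x, {f ≤ 0}) ≤ (Δ/δ)·max(f(x), 0) for all x ∈ X. -/
open Topology
open scoped ENNReal

/-!
If `f x = r > 0` and `u` lies in `{f ≤ -δ}`, convexity puts the point of the segment `[x, u]` at
parameter `r / (r + δ)` into `{f ≤ 0}`, so `dist(x, {f ≤ 0}) ≤ r / (r + δ) · dist(x, {f ≤ -δ})`.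
The hypothesis bounds `dist(x, {f ≤ -δ}) ≤ dist(x, {f ≤ 0}) + Δ`, and solving the resulting
linear inequality for `dist(x, {f ≤ 0})` gives the bound `Δ / δ · r`.
-/

open Metric

namespace Metric

theorem infDist_le_infDist_add_of_forall_infDist_le {α : Type*} [PseudoMetricSpace α]
    {s t : Set α} {Δ : ℝ} (hs : s.Nonempty) (h : ∀ y ∈ s, infDist y t ≤ Δ) (x : α) :
    infDist x t ≤ infDist x s + Δ := by
  have : infDist x t - Δ ≤ infDist x s :=
    (le_infDist hs).2 fun y hy => by
      linarith [infDist_le_infDist_add_dist (x := x) (y := y) (s := t), h y hy]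
  linarith

end Metric

namespace ERealConvexOn

variable {X : Type*} [NormedAddCommGroup X] [NormedSpace ℝ X] {f : X → EReal}

theorem apply_lineMap_le (hf : ERealConvexOn f) {x y : X} {r s t : ℝ}
    (hx : f x ≤ r) (hy : f y ≤ s) (ht₀ : 0 ≤ t) (ht₁ : t ≤ 1) :
    f (AffineMap.lineMap x y t) ≤ ((1 - t) * r + t * s : ℝ) := by
  rw [AffineMap.lineMap_apply_module]
  calc f ((1 - t) • x + t • y) ≤ ((1 - t : ℝ) : EReal) * f x + (t : EReal) * f y :=
        hf x y _ _ (by linarith) ht₀ (by ring)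
    _ ≤ ((1 - t : ℝ) : EReal) * r + (t : EReal) * s := by gcongr
    _ = ((1 - t) * r + t * s : ℝ) := by norm_cast

theorem infDist_sublevel_le_mul_dist (hf : ERealConvexOn f) {x u : X} {r δ : ℝ}
    (hr : 0 ≤ r) (hδ : 0 < δ) (hx : f x ≤ r) (hu : f u ≤ (-δ : ℝ)) :
    infDist x {y | f y ≤ 0} ≤ r / (r + δ) * dist x u := by
  have hrδ : 0 < r + δ := by linarith
  set t := r / (r + δ)
  have ht₀ : 0 ≤ t := div_nonneg hr hrδ.le
  have ht₁ : t ≤ 1 := (div_le_one hrδ).2 (by linarith)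
  have hmem : f (AffineMap.lineMap x u t) ≤ 0 := by
    have hzero : (1 - t) * r + t * -δ = 0 := by
      simp only [t]
      field_simp
      ring
    simpa only [hzero, EReal.coe_zero] using hf.apply_lineMap_le hx hu ht₀ ht₁
  calc infDist x {y | f y ≤ 0} ≤ dist x (AffineMap.lineMap x u t) :=
        infDist_le_dist_of_mem hmem
    _ = t * dist x u := by rw [dist_left_lineMap, Real.norm_of_nonneg ht₀]

theorem infDist_sublevel_le_of_le (hf : ERealConvexOn f) {δ Δ : ℝ} (hδ : 0 < δ)
    (hne : {y | f y ≤ ((-δ : ℝ) : EReal)}.Nonempty)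
    (hdist : ∀ x, f x ≤ 0 → infDist x {y | f y ≤ ((-δ : ℝ) : EReal)} ≤ Δ)
    {x : X} {r : ℝ} (hr : 0 < r) (hx : f x ≤ r) :
    infDist x {y | f y ≤ 0} ≤ Δ / δ * r := by
  have hrδ : 0 < r + δ := by linarith
  have hne₀ : {y | f y ≤ 0}.Nonempty :=
    hne.mono fun y (hy : f y ≤ _) => hy.trans (by exact_mod_cast (neg_neg_of_pos hδ).le)
  set D := infDist x {y | f y ≤ 0}
  have ht : 0 < r / (r + δ) := div_pos hr hrδ
  have hD : D ≤ r / (r + δ) * infDist x {y | f y ≤ ((-δ : ℝ) : EReal)} := by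
    rw [← div_le_iff₀' ht]
    exact (le_infDist hne).2 fun u hu =>
      (div_le_iff₀' ht).2 (hf.infDist_sublevel_le_mul_dist hr.le hδ hx hu)
  have hD' : D ≤ r / (r + δ) * (D + Δ) :=
    hD.trans (mul_le_mul_of_nonneg_left
      (infDist_le_infDist_add_of_forall_infDist_le hne₀ hdist x) ht.le)
  rw [div_mul_eq_mul_div, le_div_iff₀ hrδ] at hD'
  rw [div_mul_eq_mul_div, le_div_iff₀ hδ]
  linarith

end ERealConvexOn

theorem stmt10_general {X : Type*} [NormedAddCommGroup X] [NormedSpace ℝ X]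
    (f : X → EReal) (hconv : ERealConvexOn f)
    (hne : {y | f y ≤ 0}.Nonempty)
    (δ Δ : ℝ) (hδ : 0 < δ) (hΔ : 0 < Δ)
    (hne' : {y | f y ≤ ((-δ : ℝ) : EReal)}.Nonempty)
    (hdist : ∀ x, f x ≤ 0 → Metric.infDist x {y | f y ≤ ((-δ : ℝ) : EReal)} ≤ Δ) :
    ∀ x, (EMetric.infEdist x {y | f y ≤ 0} : EReal) ≤
        ((Δ / δ : ℝ) : EReal) * max (f x) 0 := by
  intro x
  change ((infEDist x {y | f y ≤ 0} : ℝ≥0∞) : EReal) ≤ _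
  have hΔδ : 0 < Δ / δ := div_pos hΔ hδ
  rcases le_or_gt (f x) 0 with hx | hx
  · rw [infEDist_zero_of_mem (show x ∈ {y | f y ≤ 0} from hx), EReal.coe_ennreal_zero]
    exact mul_nonneg (by exact_mod_cast hΔδ.le) (le_max_right _ _)
  rcases eq_or_ne (f x) ⊤ with htop | htop
  · rw [htop, max_eq_left le_top, EReal.coe_mul_top_of_pos hΔδ]
    exact le_top
  have hr : f x = (f x).toReal := (EReal.coe_toReal htop hx.ne_bot).symm
  have hr₀ : 0 < (f x).toReal := by exact_mod_cast hr ▸ hx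
  rw [max_eq_left hx.le, hr, ← EReal.coe_ennreal_toReal (infEDist_ne_top hne), ← EReal.coe_mul]
  exact_mod_cast hconv.infDist_sublevel_le_of_le hδ hne' hdist hr₀ hr.le

theorem stmt10 {X : Type*} [NormedAddCommGroup X] [NormedSpace ℝ X] [CompleteSpace X]
    (f : X → EReal) (hlsc : LowerSemicontinuous f) (hconv : ERealConvexOn f)
    (hproper : ∃ x, f x ≠ ⊤) (hbot : ∀ x, f x ≠ ⊥)
    (hne : {y | f y ≤ 0}.Nonempty)
    (δ Δ : ℝ) (hδ : 0 < δ) (hΔ : 0 < Δ)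
    (hne' : {y | f y ≤ ((-δ : ℝ) : EReal)}.Nonempty)
    (hdist : ∀ x, f x ≤ 0 → Metric.infDist x {y | f y ≤ ((-δ : ℝ) : EReal)} ≤ Δ) :
    ∀ x, (EMetric.infEdist x {y | f y ≤ 0} : EReal) ≤
        ((Δ / δ : ℝ) : EReal) * max (f x) 0 :=
  stmt10_general f hconv hne δ Δ hδ hΔ hne' hdist
end

section
/- Let f : X → ℝ ∪ {+∞} be a proper lower semicontinuous convex function on a Banach space and τ > 0, with −∞ < α < β ≤ +∞. If dist(0, ∂f(x)) ≥ 1/τ for all x with α < f(x) < β, then τ(f(x) − α) ≥ dist(x, {f ≤ α}) for all x with α < f(x) < β. -/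
open Topology
open scoped ENNReal

/-!
Fix `τ' > τ` and apply Ekeland's variational principle to `(f - α)⁺` with constant `1 / τ'`,
starting at `x`. The point `y` it produces either lies in `{f ≤ α}`, at distance at most
`τ' (f x - α)` from `x`, or satisfies `f > α` near `y`; in the latter case `y` minimises
`f + ‖· - y‖ / τ'` locally, hence globally by convexity, and separating the epigraph of `f` from
the open cone below `f y - ‖· - y‖ / τ'` yields a subgradient at `y` of norm at most
`1 / τ' < 1 / τ`, which the hypothesis forbids. Letting `τ' ↓ τ` gives the bound.
-/

open Filter

section Ekeland

variable {X : Type*} [PseudoEMetricSpace X] {g : X → ℝ≥0∞} {K : ℝ≥0∞}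

def ekelandSet (g : X → ℝ≥0∞) (K : ℝ≥0∞) (w : X) : Set X :=
  {z | g z + K * edist z w ≤ g w}

lemma self_mem_ekelandSet (w : X) : w ∈ ekelandSet g K w := by
  simp [ekelandSet]

lemma apply_le_of_mem_ekelandSet {z w : X} (hz : z ∈ ekelandSet g K w) : g z ≤ g w :=
  le_self_add.trans hz

lemma ekelandSet_subset_of_mem {z w : X} (hz : z ∈ ekelandSet g K w) :
    ekelandSet g K z ⊆ ekelandSet g K w := fun v hv =>
  calc g v + K * edist v w ≤ g v + K * edist v z + K * edist z w := by
        rw [add_assoc, ← mul_add]; gcongr; exact edist_triangle _ _ _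
    _ ≤ g z + K * edist z w := by gcongr; exact hv
    _ ≤ g w := hz

lemma isClosed_ekelandSet (hg : LowerSemicontinuous g) (hK : K ≠ ⊤) (w : X) :
    IsClosed (ekelandSet g K w) :=
  (hg.add ((ENNReal.continuous_const_mul hK).comp
    (continuous_id.edist continuous_const)).lowerSemicontinuous).isClosed_preimage (g w)

lemma exists_mem_ekelandSet_forall_le_add (w : X) {ε : ℝ≥0∞} (hε : ε ≠ 0) :
    ∃ z ∈ ekelandSet g K w, ∀ v ∈ ekelandSet g K w, g z ≤ g v + ε := by
  by_cases hm : ⨅ v ∈ ekelandSet g K w, g v = ⊤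
  · refine ⟨w, self_mem_ekelandSet w, fun v hv => ?_⟩
    rw [top_unique (hm.symm.le.trans (biInf_le g hv))]
    exact le_top.trans le_self_add
  · obtain ⟨z, hlt⟩ := iInf_lt_iff.1 (ENNReal.lt_add_right hm hε)
    obtain ⟨hz, hlt⟩ := iInf_lt_iff.1 hlt
    exact ⟨z, hz, fun v hv => hlt.le.trans (by gcongr; exact biInf_le g hv)⟩

theorem ekeland_variational_principle [CompleteSpace X] (hg : LowerSemicontinuous g) (hK₀ : K ≠ 0)
    (hK : K ≠ ⊤) {x : X} (hx : g x ≠ ⊤) :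
    ∃ y ∈ ekelandSet g K x, ∀ z, g y ≤ g z + K * edist z y := by
  choose F hF_mem hF_le using fun (n : ℕ) (w : X) =>
    exists_mem_ekelandSet_forall_le_add (g := g) (K := K) w (ε := 2⁻¹ ^ n) (by simp)
  let s : ℕ → X := fun n => Nat.rec x (fun n w => F n w) n
  have hS_anti : Antitone fun n => ekelandSet g K (s n) :=
    antitone_nat_of_succ_le fun n => ekelandSet_subset_of_mem (hF_mem n (s n))
  have hs_mem {n m : ℕ} (h : n ≤ m) : s m ∈ ekelandSet g K (s n) :=
    hS_anti h (self_mem_ekelandSet _)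
  -- `s (n + 1)` is a `2⁻¹ ^ n`-minimiser of `g` on `ekelandSet g K (s n)`, which pins the later
  -- terms within `K⁻¹ / 2 ^ n` of it.
  have hs_le {n : ℕ} {v : X} (hv : v ∈ ekelandSet g K (s (n + 1))) :
      g (s (n + 1)) ≤ g v + 2⁻¹ ^ n :=
    hF_le n (s n) v (hS_anti n.le_succ hv)
  have hdist {n : ℕ} {v : X} (hv : v ∈ ekelandSet g K (s (n + 1))) :
      edist v (s (n + 1)) ≤ K⁻¹ / 2 ^ n := by
    have hv_top : g v ≠ ⊤ := ne_top_of_le_ne_top hx <| (apply_le_of_mem_ekelandSet hv).trans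
      (apply_le_of_mem_ekelandSet (hs_mem (Nat.zero_le (n + 1))))
    have : K * edist v (s (n + 1)) ≤ 2⁻¹ ^ n :=
      ENNReal.le_of_add_le_add_left hv_top (hv.trans (hs_le hv))
    rwa [ENNReal.mul_le_iff_le_inv hK₀ hK, ← ENNReal.inv_pow, ← div_eq_mul_inv] at this
  have hcauchy : CauchySeq fun n => s (n + 1) :=
    cauchySeq_of_edist_le_geometric_two _ (ENNReal.inv_ne_top.2 hK₀) fun n => by
      rw [edist_comm]; exact hdist (hs_mem (Nat.le_succ _))
  obtain ⟨y, hy⟩ := cauchySeq_tendsto_of_complete hcauchy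
  have hy_mem (n : ℕ) : y ∈ ekelandSet g K (s n) :=
    (isClosed_ekelandSet hg hK _).mem_of_tendsto hy
      (eventually_atTop.2 ⟨n, fun m hm => hs_mem (n := n) (m := m + 1) (by omega)⟩)
  refine ⟨y, hy_mem 0, fun z => ?_⟩
  by_contra! hlt
  have hz (n : ℕ) : z ∈ ekelandSet g K (s n) := ekelandSet_subset_of_mem (hy_mem n) hlt.le
  have hyz : g y ≤ g z := ENNReal.le_of_forall_pos_le_add fun ε hε _ => by
    obtain ⟨n, hn⟩ := ENNReal.exists_inv_two_pow_lt (ENNReal.coe_ne_zero.2 hε.ne')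
    calc g y ≤ g (s (n + 1)) := apply_le_of_mem_ekelandSet (hy_mem (n + 1))
      _ ≤ g z + 2⁻¹ ^ n := hs_le (hz (n + 1))
      _ ≤ g z + ε := by gcongr
  exact (hlt.trans_le hyz).not_ge le_self_add

end Ekeland

section EReal

lemma EReal.coe_toENNReal_sub_add {t : EReal} {α : ℝ} (h : (α : EReal) ≤ t) :
    ((t - α).toENNReal : EReal) + α = t := by
  rw [EReal.coe_toENNReal (EReal.sub_nonneg (.inr (EReal.coe_ne_top α))
    (.inr (EReal.coe_ne_bot α)) |>.2 h), EReal.sub_add_cancel]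

lemma EReal.le_add_of_toENNReal_sub_le {t s : EReal} {α : ℝ} {c : ℝ≥0∞}
    (ht : (α : EReal) ≤ t) (hs : (α : EReal) ≤ s)
    (h : (t - α).toENNReal ≤ (s - α).toENNReal + c) : t ≤ s + c := by
  rw [← EReal.coe_toENNReal_sub_add ht, ← EReal.coe_toENNReal_sub_add hs, add_right_comm]
  gcongr
  exact_mod_cast h

lemma LowerSemicontinuous.toENNReal_sub {Y : Type*} [TopologicalSpace Y] {f : Y → EReal}
    (hf : LowerSemicontinuous f) (a : ℝ) : LowerSemicontinuous fun z => (f z - a).toENNReal :=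
  EReal.continuous_toENNReal.comp_lowerSemicontinuous
    (hf.add' lowerSemicontinuous_const fun _ =>
      EReal.continuousAt_add (.inr (by simp)) (.inr (by simp)))
    fun _ _ h => EReal.toENNReal_le_toENNReal h

end EReal

section Convex

variable {X : Type*} [NormedAddCommGroup X] [NormedSpace ℝ X]

def HasSubgradientAt (f : X → EReal) (u : X →L[ℝ] ℝ) (x : X) : Prop :=
  ∀ y, f x + ((u y - u x : ℝ) : EReal) ≤ f y

namespace ERealConvexOn

variable {f : X → EReal}

lemma apply_add_le_coe (hf : ERealConvexOn f) {x y : X} {s t a b : ℝ} (hx : f x ≤ s)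
    (hy : f y ≤ t) (ha : 0 ≤ a) (hb : 0 ≤ b) (hab : a + b = 1) :
    f (a • x + b • y) ≤ ((a * s + b * t : ℝ) : EReal) :=
  calc f (a • x + b • y) ≤ (a : EReal) * f x + (b : EReal) * f y := hf x y a b ha hb hab
    _ ≤ (a : EReal) * s + (b : EReal) * t :=
      add_le_add (mul_le_mul_of_nonneg_left hx (EReal.coe_nonneg.2 ha))
        (mul_le_mul_of_nonneg_left hy (EReal.coe_nonneg.2 hb))
    _ = _ := by norm_cast

lemma convex_epigraph (hf : ERealConvexOn f) : Convex ℝ {p : X × ℝ | f p.1 ≤ p.2} :=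
  fun _ hp _ hq _ _ ha hb hab => hf.apply_add_le_coe hp hq ha hb hab

lemma forall_le_of_eventually_le (hf : ERealConvexOn f) {y : X} {p K : ℝ} (hy : f y = p)
    (hloc : ∀ᶠ z in 𝓝 y, ((p - K * ‖z - y‖ : ℝ) : EReal) ≤ f z) (z : X) :
    ((p - K * ‖z - y‖ : ℝ) : EReal) ≤ f z := by
  refine EReal.le_of_forall_lt_iff_le.1 fun q hq => ?_
  have hpath : Tendsto (fun a : ℝ => a • z + (1 - a) • y) (𝓝[>] 0) (𝓝 y) := by
    have : Continuous fun a : ℝ => a • z + (1 - a) • y := by fun_prop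
    simpa using (this.tendsto 0).mono_left nhdsWithin_le_nhds
  obtain ⟨a, hloc_a, ha₀, ha₁⟩ := ((hpath.eventually hloc).and (Ioo_mem_nhdsGT one_pos)).exists
  have hnorm : ‖a • z + (1 - a) • y - y‖ = a * ‖z - y‖ := by
    rw [show a • z + (1 - a) • y - y = a • (z - y) by module, norm_smul, Real.norm_of_nonneg ha₀.le]
  have h := hloc_a.trans (hf.apply_add_le_coe hq.le hy.le ha₀.le (by linarith) (by ring))
  rw [hnorm, EReal.coe_le_coe_iff] at h
  rw [EReal.coe_le_coe_iff]
  nlinarith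

lemma exists_hasSubgradientAt_of_forall_le (hf : ERealConvexOn f) {y : X} {p K : ℝ}
    (hy : f y = p) (hK : 0 ≤ K) (hle : ∀ z, ((p - K * ‖z - y‖ : ℝ) : EReal) ≤ f z) :
    ∃ u : X →L[ℝ] ℝ, HasSubgradientAt f u y ∧ ‖u‖ ≤ K := by
  set B : Set (X × ℝ) := {q | q.2 + K * ‖q.1 - y‖ < p}
  have hB_conv : Convex ℝ B := by
    intro q hq r hr a b ha hb hab
    have hnorm : ‖a • q.1 + b • r.1 - y‖ ≤ a * ‖q.1 - y‖ + b * ‖r.1 - y‖ :=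
      calc ‖a • q.1 + b • r.1 - y‖ = ‖a • (q.1 - y) + b • (r.1 - y)‖ := by
            rw [smul_sub, smul_sub, sub_add_sub_comm, ← add_smul, hab, one_smul]
        _ ≤ a * ‖q.1 - y‖ + b * ‖r.1 - y‖ := (norm_add_le _ _).trans_eq <| by
            rw [norm_smul, norm_smul, Real.norm_of_nonneg ha, Real.norm_of_nonneg hb]
    have hcomb :=
      convex_Iio p (x := q.2 + K * ‖q.1 - y‖) (y := r.2 + K * ‖r.1 - y‖) hq hr ha hb hab
    simp only [B, Set.mem_ofPred_eq, Set.mem_Iio, smul_eq_mul, Prod.fst_add, Prod.snd_add,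
      Prod.smul_fst, Prod.smul_snd] at hcomb ⊢
    linarith [mul_le_mul_of_nonneg_left hnorm hK]
  have hB_open : IsOpen B := isOpen_lt (by fun_prop) continuous_const
  have hdisj : Disjoint B {q : X × ℝ | f q.1 ≤ q.2} := by
    refine Set.disjoint_left.2 fun q (hqB : _ < p) (hqA : f q.1 ≤ q.2) => ?_
    have := EReal.coe_le_coe_iff.1 ((hle q.1).trans hqA)
    linarith
  obtain ⟨φ, s, hφB, hφA⟩ := geometric_hahn_banach_open hB_conv hB_open hf.convex_epigraph hdisj
  set ψ := φ.comp (ContinuousLinearMap.inl ℝ X ℝ)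
  set c := φ (0, 1)
  have hφ (z : X) (t : ℝ) : φ (z, t) = ψ z + t * c := by
    rw [← smul_eq_mul, ← map_smul, ContinuousLinearMap.comp_apply, ContinuousLinearMap.inl_apply,
      ← map_add]
    simp
  have hs : s ≤ ψ y + p * c := by simpa [hφ] using hφA (y, p) (by simp [hy])
  have hc : 0 < c := by
    have := hφB (y, p - 1) (by simp [B])
    rw [hφ] at this
    linarith
  have hB_le (z : X) : ψ z + (p - K * ‖z - y‖) * c ≤ s := by
    by_contra! h
    have := hφB (z, (s - ψ z) / c) (by
      change (s - ψ z) / c + K * ‖z - y‖ < p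
      rw [div_add' _ _ _ hc.ne', div_lt_iff₀ hc]
      linarith)
    rw [hφ, div_mul_cancel₀ _ hc.ne'] at this
    linarith
  have hA_le {z : X} {t : ℝ} (ht : f z ≤ t) : ψ y + p * c ≤ ψ z + t * c := by
    have h₁ := hB_le y
    have h₂ := hφA (z, t) ht
    rw [sub_self, norm_zero, mul_zero, sub_zero] at h₁
    rw [hφ] at h₂
    linarith
  let u : X →L[ℝ] ℝ := -c⁻¹ • ψ
  have hu (z : X) : u z = -(ψ z / c) := by simp [u, div_eq_inv_mul]
  refine ⟨u, fun z => EReal.le_of_forall_lt_iff_le.1 fun t ht => ?_,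
    u.opNorm_le_bound hK fun v => ?_⟩
  · have h := hA_le ht.le
    rw [hy, ← EReal.coe_add, EReal.coe_le_coe_iff, hu, hu, neg_sub_neg, ← sub_div,
      add_comm, ← le_sub_iff_add_le, div_le_iff₀ hc]
    linarith
  · have h₁ := hB_le (y + v)
    have h₂ := hB_le (y - v)
    simp only [map_add, map_sub, add_sub_cancel_left, sub_sub_cancel_left, norm_neg] at h₁ h₂
    rw [hu, norm_neg, Real.norm_eq_abs, abs_div, abs_of_pos hc, div_le_iff₀ hc, abs_le]
    constructor <;> nlinarith

theorem exists_mem_sublevel_or_hasSubgradientAt [CompleteSpace X] (hf : ERealConvexOn f)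
    (hlsc : LowerSemicontinuous f) {α κ r : ℝ} (hκ : 0 < κ) {x : X} (hx : f x = r)
    (hαr : α < r) :
    (∃ y, f y ≤ α ∧ κ * dist x y ≤ r - α) ∨
      ∃ y u, (α : EReal) < f y ∧ f y ≤ r ∧ HasSubgradientAt f u y ∧ ‖u‖ ≤ κ := by
  set g : X → ℝ≥0∞ := fun z => (f z - α).toENNReal
  have hK (z w : X) : ENNReal.ofReal κ * edist z w = ENNReal.ofReal (κ * ‖z - w‖) := by
    rw [edist_dist, dist_eq_norm, ENNReal.ofReal_mul hκ.le]
  have hgx : g x = ENNReal.ofReal (r - α) := by simp only [g, hx, ← EReal.coe_sub]; rfl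
  obtain ⟨y, hyx, hy⟩ := ekeland_variational_principle (hlsc.toENNReal_sub α) (by simpa using hκ)
    ENNReal.ofReal_ne_top (hgx ▸ ENNReal.ofReal_ne_top)
  by_cases hyα : f y ≤ α
  · refine .inl ⟨y, hyα, ?_⟩
    have h : ENNReal.ofReal κ * edist y x ≤ g x := le_add_self.trans hyx
    rwa [hK, hgx, ENNReal.ofReal_le_ofReal_iff (by linarith), ← dist_eq_norm, dist_comm] at h
  refine .inr ?_
  rw [not_le] at hyα
  have hαx : (α : EReal) ≤ f x := by rw [hx]; exact_mod_cast hαr.le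
  have hyr : f y ≤ r := by
    simpa [hx] using EReal.le_add_of_toENNReal_sub_le (c := 0) hyα.le hαx
      (by simpa using apply_le_of_mem_ekelandSet hyx)
  obtain ⟨p, hp⟩ : ∃ p : ℝ, f y = p :=
    ⟨_, (EReal.coe_toReal (hyr.trans_lt (EReal.coe_lt_top r)).ne hyα.ne_bot).symm⟩
  have hloc : ∀ᶠ z in 𝓝 y, ((p - κ * ‖z - y‖ : ℝ) : EReal) ≤ f z := by
    filter_upwards [hlsc y α hyα] with z hz
    have h := EReal.le_add_of_toENNReal_sub_le hyα.le hz.le (hy z)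
    rw [hK, EReal.coe_ennreal_ofReal, max_eq_left (by positivity), hp] at h
    exact EReal.sub_le_of_le_add h
  obtain ⟨u, hu, hu_norm⟩ := hf.exists_hasSubgradientAt_of_forall_le hp hκ.le
    (hf.forall_le_of_eventually_le hp hloc)
  exact ⟨y, u, hyα, hyr, hu, hu_norm⟩

end ERealConvexOn

end Convex

theorem stmt12_general {X : Type*} [NormedAddCommGroup X] [NormedSpace ℝ X] [CompleteSpace X]
    (f : X → EReal) (hlsc : LowerSemicontinuous f) (hconv : ERealConvexOn f)
    (α : ℝ) (β : EReal) (τ : ℝ) (hτ : 0 < τ)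
    (hsub : ∀ x, (α : EReal) < f x → f x < β →
      ENNReal.ofReal (1 / τ) ≤
        ⨅ u ∈ {u : X →L[ℝ] ℝ | ∀ y, f x + ((u y - u x : ℝ) : EReal) ≤ f y},
          (‖u‖₊ : ℝ≥0∞)) :
    ∀ x, (α : EReal) < f x → f x < β →
      EMetric.infEdist x {y | f y ≤ (α : EReal)} ≤
        ENNReal.ofReal (τ * ((f x).toReal - α)) := by
  intro x hαx hxβ
  set r := (f x).toReal
  have hx : f x = r := (EReal.coe_toReal (hxβ.trans_le le_top).ne hαx.ne_bot).symm
  have hαr : α < r := by rw [hx] at hαx; exact_mod_cast hαx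
  have hbound (τ' : ℝ) (hτ' : τ < τ') :
      Metric.infEDist x {y | f y ≤ (α : EReal)} ≤ ENNReal.ofReal (τ' * (r - α)) := by
    have hτ'₀ : 0 < τ' := hτ.trans hτ'
    rcases ERealConvexOn.exists_mem_sublevel_or_hasSubgradientAt hconv hlsc (inv_pos.2 hτ'₀)
      hx hαr with ⟨y, hyα, hy⟩ | ⟨y, u, hαy, hyr, hu, hu_norm⟩
    · refine (Metric.infEDist_le_edist_of_mem (x := x) (y := y) hyα).trans ?_
      rw [edist_dist]
      exact ENNReal.ofReal_le_ofReal ((inv_mul_le_iff₀ hτ'₀).1 hy)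
    · have h := (hsub y hαy (hyr.trans_lt (hx ▸ hxβ))).trans (biInf_le _ hu)
      rw [← enorm_eq_nnnorm, ← ofReal_norm u, ENNReal.ofReal_le_ofReal_iff (norm_nonneg u)] at h
      have := inv_strictAnti₀ hτ hτ'
      rw [one_div] at h
      linarith
  have hlim : Tendsto (fun τ' => ENNReal.ofReal (τ' * (r - α))) (𝓝[>] τ)
      (𝓝 (ENNReal.ofReal (τ * (r - α)))) :=
    ((ENNReal.continuous_ofReal.comp (continuous_mul_const _)).tendsto τ).mono_left
      nhdsWithin_le_nhds
  exact ge_of_tendsto hlim (eventually_nhdsWithin_of_forall hbound)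

theorem stmt12 {X : Type*} [NormedAddCommGroup X] [NormedSpace ℝ X] [CompleteSpace X]
    (f : X → EReal) (hlsc : LowerSemicontinuous f) (hconv : ERealConvexOn f)
    (hproper : ∃ x, f x ≠ ⊤) (hbot : ∀ x, f x ≠ ⊥)
    (α : ℝ) (β : EReal) (hαβ : (α : EReal) < β) (τ : ℝ) (hτ : 0 < τ)
    (hsub : ∀ x, (α : EReal) < f x → f x < β →
      ENNReal.ofReal (1 / τ) ≤
        ⨅ u ∈ {u : X →L[ℝ] ℝ | ∀ y, f x + ((u y - u x : ℝ) : EReal) ≤ f y},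
          (‖u‖₊ : ℝ≥0∞)) :
    ∀ x, (α : EReal) < f x → f x < β →
      EMetric.infEdist x {y | f y ≤ (α : EReal)} ≤
        ENNReal.ofReal (τ * ((f x).toReal - α)) :=
  stmt12_general f hlsc hconv α β τ hτ hsub
end
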